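/- arXiv:1103.5732 — 7 statements merged into one kernel-verified Lean document; each statement's English description precedes it below -/
import Mathlib

section
/- If p, q, r, s are primes, each congruent to 1 modulo 4, and φ_p + φ_q = φ_r + φ_s, then {p, q} = {r, s} as multisets (i.e. either p = r and q = s, or p = s and q = r). -/
/-!
Put `z_p = u_p + v_p i ∈ ℤ[i]`. Since `0 < v_p < u_p`, `z_p` lies in the first octant and
`π φ_p = arg z_p`, so the hypothesis says that `z_p z_q` and `z_r z_s`, both in the open right
half-plane, have the same argument. The real and imaginary parts of `z_p z_q` are coprime: a common
prime factor `ℓ` has `ℓ² ∣ |z_p z_q|² = p q`, forcing `ℓ = p = q`, and then `ℓ` would divide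
`Im z_p² = 2 u_p v_p`. Gaussian integers in the right half-plane with coprime parts and equal
arguments are equal, so `p q = r s` by taking norms.
-/

open Real

local notation "ℤ[i]" => GaussianInt

theorem Nat.Prime.eq_and_eq_of_sq_dvd_mul {ℓ p q : ℕ} (hℓ : ℓ.Prime) (hp : p.Prime)
    (hq : q.Prime) (h : ℓ ^ 2 ∣ p * q) : ℓ = p ∧ ℓ = q := by
  wlog hℓp : ℓ ∣ p generalizing p q
  · have hℓq : ℓ ∣ q := (hℓ.dvd_mul.mp ((dvd_pow_self ℓ two_ne_zero).trans h)).resolve_left hℓp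
    exact (this hq hp (mul_comm p q ▸ h) hℓq).symm
  obtain rfl := (Nat.prime_dvd_prime_iff_eq hℓ hp).mp hℓp
  rw [sq] at h
  exact ⟨rfl, (Nat.prime_dvd_prime_iff_eq hℓ hq).mp (Nat.dvd_of_mul_dvd_mul_left hℓ.pos h)⟩

theorem Nat.Prime.eq_and_eq_or_eq_and_eq_of_mul_eq_mul {p q r s : ℕ} (hp : p.Prime)
    (hr : r.Prime) (hs : s.Prime) (h : p * q = r * s) :
    (p = r ∧ q = s) ∨ (p = s ∧ q = r) := by
  rcases hp.dvd_mul.mp (Dvd.intro q h) with hpr | hps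
  · obtain rfl := (Nat.prime_dvd_prime_iff_eq hp hr).mp hpr
    exact .inl ⟨rfl, Nat.eq_of_mul_eq_mul_left hp.pos h⟩
  · obtain rfl := (Nat.prime_dvd_prime_iff_eq hp hs).mp hps
    exact .inr ⟨rfl, Nat.eq_of_mul_eq_mul_left hp.pos (h.trans (mul_comm r p))⟩

namespace GaussianInt

def InFirstOctant (z : ℤ[i]) : Prop := 0 < z.im ∧ z.im < z.re

theorem norm_eq_sq_add_sq (z : ℤ[i]) : z.norm = z.re ^ 2 + z.im ^ 2 := by
  simp only [Zsqrtd.norm_def]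
  ring

theorem InFirstOctant.re_pos {z : ℤ[i]} (hz : InFirstOctant z) : 0 < z.re :=
  hz.1.trans hz.2

theorem InFirstOctant.re_mul_pos {z w : ℤ[i]} (hz : InFirstOctant z) (hw : InFirstOctant w) :
    0 < (z * w).re := by
  obtain ⟨hz₀, hz₁⟩ := hz
  obtain ⟨hw₀, hw₁⟩ := hw
  rw [Zsqrtd.re_mul]
  nlinarith [mul_lt_mul'' hz₁ hw₁ hz₀.le hw₀.le]

theorem arctan_add_arctan_eq_arctan_mul {z w : ℤ[i]} (hz : 0 < z.re) (hw : 0 < w.re)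
    (hzw : 0 < (z * w).re) :
    arctan (z.im / z.re) + arctan (w.im / w.re) = arctan ((z * w).im / (z * w).re) := by
  have hzw' : (z.im * w.im : ℝ) < z.re * w.re := by
    rw [Zsqrtd.re_mul] at hzw
    exact_mod_cast (by linarith : z.im * w.im < z.re * w.re)
  have hz' : (0 : ℝ) < z.re := by exact_mod_cast hz
  have hw' : (0 : ℝ) < w.re := by exact_mod_cast hw
  rw [arctan_add]
  · congr 1
    push_cast [Zsqrtd.re_mul, Zsqrtd.im_mul]
    field_simp
    ring
  · rw [div_mul_div_comm, div_lt_one (by positivity)]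
    exact hzw'

theorem eq_of_arctan_div_eq {z w : ℤ[i]} (hz : 0 < z.re) (hw : 0 < w.re)
    (hzc : IsCoprime z.re z.im) (hwc : IsCoprime w.re w.im)
    (h : arctan (z.im / z.re) = arctan (w.im / w.re)) : z = w := by
  have hq : (z.im : ℚ) / z.re = (w.im : ℚ) / w.re := by
    exact_mod_cast arctan_injective h
  obtain ⟨him, hre⟩ := Rat.div_int_inj hz hw (Int.isCoprime_iff_gcd_eq_one.mp hzc.symm)
    (Int.isCoprime_iff_gcd_eq_one.mp hwc.symm) hq
  exact Zsqrtd.ext hre him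

theorem isCoprime_re_im_mul {z w : ℤ[i]} {p q : ℕ} (hp : p.Prime) (hq : q.Prime)
    (hz : z.norm = p) (hw : w.norm = q) (hzw : p = q → z = w) (hzo : InFirstOctant z) :
    IsCoprime (z * w).re (z * w).im := by
  refine Int.isCoprime_iff_nat_coprime.mpr (Nat.coprime_of_dvd fun ℓ hℓ hre him => ?_)
  rw [← Int.natCast_dvd] at hre him
  have hsq : ℓ ^ 2 ∣ p * q := by
    have : ((ℓ ^ 2 : ℕ) : ℤ) ∣ (z * w).norm := by
      rw [norm_eq_sq_add_sq, Nat.cast_pow]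
      exact dvd_add (pow_dvd_pow_of_dvd hre 2) (pow_dvd_pow_of_dvd him 2)
    rwa [Zsqrtd.norm_mul, hz, hw, ← Nat.cast_mul, Int.natCast_dvd_natCast] at this
  obtain ⟨rfl, rfl⟩ := hℓ.eq_and_eq_of_sq_dvd_mul hp hq hsq
  obtain rfl := hzw rfl
  obtain ⟨h₀, h₁⟩ := hzo
  have hnorm : (ℓ : ℤ) = z.re ^ 2 + z.im ^ 2 := by rw [← hz, norm_eq_sq_add_sq]
  -- `ℓ = |z|²` divides none of the factors of `Im z² = 2 Re z Im z`
  rw [show (z * z).im = 2 * (z.re * z.im) by rw [Zsqrtd.im_mul]; ring] at him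
  rcases (Nat.prime_iff_prime_int.mp hℓ).dvd_mul.mp him with h2 | hreim
  · have := Int.le_of_dvd two_pos h2
    nlinarith
  rcases (Nat.prime_iff_prime_int.mp hℓ).dvd_mul.mp hreim with hre' | him'
  · have := Int.le_of_dvd (h₀.trans h₁) hre'
    nlinarith
  · have := Int.le_of_dvd h₀ him'
    nlinarith

end GaussianInt

open GaussianInt

theorem stmt2 (u v : ℕ → ℕ) (φ : ℕ → ℝ)
    (hφ : ∀ p : ℕ, p.Prime → p % 4 = 1 →
      0 < v p ∧ v p < u p ∧ p = (u p) ^ 2 + (v p) ^ 2 ∧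
      φ p = (1 / Real.pi) * Real.arctan ((v p : ℝ) / (u p : ℝ)))
    (p q r s : ℕ)
    (hp : p.Prime) (hp4 : p % 4 = 1)
    (hq : q.Prime) (hq4 : q % 4 = 1)
    (hr : r.Prime) (hr4 : r % 4 = 1)
    (hs : s.Prime) (hs4 : s % 4 = 1)
    (h : φ p + φ q = φ r + φ s) :
    (p = r ∧ q = s) ∨ (p = s ∧ q = r) := by
  let z : ℕ → ℤ[i] := fun n => ⟨u n, v n⟩
  have hz : ∀ n, n.Prime → n % 4 = 1 → InFirstOctant (z n) ∧ (z n).norm = n ∧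
      φ n * π = arctan ((z n).im / (z n).re) := by
    intro n hn hn4
    obtain ⟨h₀, h₁, hsum, hφn⟩ := hφ n hn hn4
    refine ⟨⟨by simpa [z], by simpa [z]⟩, ?_, ?_⟩
    · rw [norm_eq_sq_add_sq]
      exact (show (u n : ℤ) ^ 2 + (v n : ℤ) ^ 2 = n by exact_mod_cast hsum.symm)
    · rw [hφn]
      field_simp
      simp [z]
  obtain ⟨hpo, hpn, hφp⟩ := hz p hp hp4
  obtain ⟨hqo, hqn, hφq⟩ := hz q hq hq4
  obtain ⟨hro, hrn, hφr⟩ := hz r hr hr4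
  obtain ⟨hso, hsn, hφs⟩ := hz s hs hs4
  have hmul : z p * z q = z r * z s := by
    refine eq_of_arctan_div_eq (hpo.re_mul_pos hqo) (hro.re_mul_pos hso)
      (isCoprime_re_im_mul hp hq hpn hqn (by rintro rfl; rfl) hpo)
      (isCoprime_re_im_mul hr hs hrn hsn (by rintro rfl; rfl) hro) ?_
    rw [← arctan_add_arctan_eq_arctan_mul hpo.re_pos hqo.re_pos (hpo.re_mul_pos hqo),
      ← arctan_add_arctan_eq_arctan_mul hro.re_pos hso.re_pos (hro.re_mul_pos hso),
      ← hφp, ← hφq, ← hφr, ← hφs, ← add_mul, ← add_mul, h]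
  have hnorm := congrArg Zsqrtd.norm hmul
  rw [Zsqrtd.norm_mul, Zsqrtd.norm_mul, hpn, hqn, hrn, hsn] at hnorm
  exact Nat.Prime.eq_and_eq_or_eq_and_eq_of_mul_eq_mul hp hr hs (by exact_mod_cast hnorm)
end

section
/- If q and s are distinct primes, both congruent to 1 modulo 4, then |φ_q − φ_s| ≥ 1/(2π·√(q·s)). -/
open Real

lemma aux_arctan_nonneg {t : ℝ} (h : 0 ≤ t) : 0 ≤ Real.arctan t := by
  rw [← Real.arctan_zero]
  exact Real.arctan_strictMono.monotone h

lemma aux_arctan_half {t : ℝ} (h0 : 0 ≤ t) (h1 : t ≤ 1) : t / 2 ≤ Real.arctan t := by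
  have hs : Real.sin (Real.arctan t) = t / Real.sqrt (1 + t ^ 2) := Real.sin_arctan t
  have hpos : 0 < Real.sqrt (1 + t ^ 2) := Real.sqrt_pos.mpr (by positivity)
  have h2 : Real.sqrt (1 + t ^ 2) ≤ 2 := by
    have : Real.sqrt (1 + t ^ 2) ≤ Real.sqrt 4 := Real.sqrt_le_sqrt (by nlinarith)
    simpa [show (4:ℝ) = 2^2 by norm_num, Real.sqrt_sq] using this
  have h3 : t / 2 ≤ t / Real.sqrt (1 + t ^ 2) :=
    div_le_div_of_nonneg_left h0 hpos h2
  have h4 : Real.sin (Real.arctan t) ≤ Real.arctan t :=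
    Real.sin_le (aux_arctan_nonneg h0)
  rw [hs] at h4
  linarith

lemma aux_arctan_abs (x : ℝ) : Real.arctan |x| = |Real.arctan x| := by
  rcases le_or_gt 0 x with h | h
  · rw [abs_of_nonneg h, abs_of_nonneg (aux_arctan_nonneg h)]
  · rw [abs_of_neg h, Real.arctan_neg, abs_of_neg]
    have : Real.arctan x < Real.arctan 0 := Real.arctan_strictMono h
    rwa [Real.arctan_zero] at this

theorem stmt4 (u v : ℕ → ℕ) (φ : ℕ → ℝ)
    (hφ : ∀ p : ℕ, p.Prime → p % 4 = 1 →
      0 < v p ∧ v p < u p ∧ p = (u p) ^ 2 + (v p) ^ 2 ∧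
      φ p = (1 / Real.pi) * Real.arctan ((v p : ℝ) / (u p : ℝ)))
    (q s : ℕ)
    (hq : q.Prime) (hq4 : q % 4 = 1)
    (hs : s.Prime) (hs4 : s % 4 = 1)
    (hne : q ≠ s) :
    1 / (2 * Real.pi * Real.sqrt ((q : ℝ) * s)) ≤ |φ q - φ s| := by
  obtain ⟨hvq, huvq, hqeq, hφq⟩ := hφ q hq hq4
  obtain ⟨hvs, huvs, hseq, hφs⟩ := hφ s hs hs4
  have huq : 0 < u q := hvq.trans huvq
  have hus : 0 < u s := hvs.trans huvs
  have huq' : (0:ℝ) < u q := by exact_mod_cast huq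
  have hus' : (0:ℝ) < u s := by exact_mod_cast hus
  have hvq' : (0:ℝ) < v q := by exact_mod_cast hvq
  have hvs' : (0:ℝ) < v s := by exact_mod_cast hvs
  set a : ℝ := (v q : ℝ) / (u q : ℝ) with ha_def
  set b : ℝ := (v s : ℝ) / (u s : ℝ) with hb_def
  have ha0 : 0 < a := div_pos hvq' huq'
  have hb0 : 0 < b := div_pos hvs' hus'
  set D : ℕ := u q * u s + v q * v s with hD_def
  set Z : ℤ := (v q : ℤ) * u s - (v s : ℤ) * u q with hZ_def
  have hDpos : 0 < D := by positivity
  have key : (q : ℤ) * s = (D : ℤ) ^ 2 + Z ^ 2 := by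
    have h1 : (q : ℤ) = (u q : ℤ) ^ 2 + (v q : ℤ) ^ 2 := by exact_mod_cast hqeq
    have h2 : (s : ℤ) = (u s : ℤ) ^ 2 + (v s : ℤ) ^ 2 := by exact_mod_cast hseq
    rw [h1, h2, hZ_def, hD_def]; push_cast; ring
  have hZne : Z ≠ 0 := by
    intro h
    have hsq : (q : ℤ) * s = (D : ℤ) ^ 2 := by rw [key, h]; ring
    have hsqn : q * s = D ^ 2 := by exact_mod_cast hsq
    have hdvd : q ∣ D := hq.dvd_of_dvd_pow (n := 2) ⟨s, by linarith [hsqn]⟩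
    obtain ⟨m, hm⟩ := hdvd
    have : q * s = q * (q * m ^ 2) := by rw [hsqn, hm]; ring
    have hs' : s = q * m ^ 2 := Nat.eq_of_mul_eq_mul_left hq.pos this
    have : q ∣ s := ⟨m ^ 2, hs'⟩
    exact hne ((Nat.prime_dvd_prime_iff_eq hq hs).mp this)
  set c : ℝ := (a - b) / (1 + a * b) with hc_def
  have hsub : Real.arctan a - Real.arctan b = Real.arctan c := by
    rw [sub_eq_add_neg, ← Real.arctan_neg, Real.arctan_add (by nlinarith)]
    rw [hc_def]
    congr 1 <;> ring
  have hceq : c = (Z : ℝ) / (D : ℝ) := by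
    rw [hc_def, ha_def, hb_def, hZ_def, hD_def]
    push_cast
    field_simp
  have hDpos' : (0:ℝ) < D := by exact_mod_cast hDpos
  have hDle : (D : ℝ) ≤ Real.sqrt ((q : ℝ) * s) := by
    apply Real.le_sqrt' hDpos' |>.mpr
    have hkey : ((q:ℝ) * s) = ((D:ℝ))^2 + ((Z:ℝ))^2 := by exact_mod_cast key
    nlinarith [sq_nonneg ((Z:ℝ))]
  have hZabs : (1:ℝ) ≤ |(Z : ℝ)| := by
    have h1 : (1:ℤ) ≤ |Z| := Int.one_le_abs hZne
    calc (1:ℝ) ≤ ((|Z| : ℤ) : ℝ) := by exact_mod_cast h1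
    _ = |(Z:ℝ)| := by push_cast; rfl
  have hsqrtpos : 0 < Real.sqrt ((q:ℝ) * s) := lt_of_lt_of_le hDpos' hDle
  have hclb : 1 / Real.sqrt ((q:ℝ)*s) ≤ |c| := by
    rw [hceq, abs_div, abs_of_pos hDpos']
    calc 1 / Real.sqrt ((q:ℝ)*s) ≤ 1 / (D:ℝ) :=
          div_le_div_of_nonneg_left zero_le_one hDpos' hDle
      _ ≤ |(Z:ℝ)| / (D:ℝ) := by gcongr
  -- main bound on |arctan a - arctan b|
  set T : ℝ := 1 / Real.sqrt ((q:ℝ)*s) with hT_def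
  have hT0 : 0 ≤ T := by positivity
  have hT1 : T ≤ 1 := by
    rw [hT_def]
    rw [div_le_one hsqrtpos]
    calc (1:ℝ) ≤ (D:ℝ) := by exact_mod_cast hDpos
      _ ≤ _ := hDle
  have hmain : T / 2 ≤ |Real.arctan a - Real.arctan b| := by
    calc T / 2 ≤ Real.arctan T := aux_arctan_half hT0 hT1
      _ ≤ Real.arctan |c| := Real.arctan_strictMono.monotone hclb
      _ = |Real.arctan c| := aux_arctan_abs c
      _ = |Real.arctan a - Real.arctan b| := by rw [hsub]
  have hπ : 0 < Real.pi := Real.pi_pos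
  have hφeq : |φ q - φ s| = |Real.arctan a - Real.arctan b| / Real.pi := by
    rw [hφq, hφs, ← mul_sub, abs_mul, abs_of_pos (by positivity : (0:ℝ) < 1 / Real.pi)]
    ring
  rw [hφeq]
  have : 1 / (2 * Real.pi * Real.sqrt ((q:ℝ)*s)) = (T / 2) / Real.pi := by
    rw [hT_def]; ring
  rw [this]
  gcongr
end

section
/- There exists a strictly increasing sequence (a_k)_{k≥1} of positive integers whose range is a Sidon set and which satisfies a_k ≤ (k−1)³ + 1 for every k ≥ 1. -/
/-- A set `S` of natural numbers is a Sidon set if whenever `a + b = c + d`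
with `a, b, c, d ∈ S`, then `{a, b} = {c, d}`. -/
def IsSidon (S : Set ℕ) : Prop :=
  ∀ a ∈ S, ∀ b ∈ S, ∀ c ∈ S, ∀ d ∈ S, a + b = c + d → (a = c ∧ b = d) ∨ (a = d ∧ b = c)

namespace GreedySidon

/-- Sum of the two entries of an unordered pair. -/
def pairSum : Sym2 ℕ → ℕ := Sym2.lift ⟨fun a b => a + b, fun a b => Nat.add_comm a b⟩

@[simp] lemma pairSum_mk (a b : ℕ) : pairSum s(a, b) = a + b := rfl

/-- The set of "bad" values: numbers `x` that could create a Sidon violation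
with elements of `s`. -/
def bad (s : Finset ℕ) : Finset ℕ :=
  ((s ×ˢ s.sym2).image fun p => pairSum p.2 - p.1) ∪
    (s.offDiag.image fun p => (p.1 + p.2) / 2)

lemma mem_bad_of_eq {s : Finset ℕ} {a b c x : ℕ} (ha : a ∈ s) (hb : b ∈ s) (hc : c ∈ s)
    (h : x + a = b + c) : x ∈ bad s := by
  apply Finset.mem_union_left
  apply Finset.mem_image.2
  refine ⟨(a, s(b, c)), ?_, ?_⟩
  · exact Finset.mem_product.2 ⟨ha, Finset.mk_mem_sym2_iff.2 ⟨hb, hc⟩⟩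
  · simp only [pairSum_mk]; omega

lemma mem_bad_mid {s : Finset ℕ} {b c x : ℕ} (hb : b ∈ s) (hc : c ∈ s) (hbc : b ≠ c)
    (h : x + x = b + c) : x ∈ bad s := by
  apply Finset.mem_union_right
  apply Finset.mem_image.2
  exact ⟨(b, c), Finset.mem_offDiag.2 ⟨hb, hc, hbc⟩, by omega⟩

lemma self_mem_bad {s : Finset ℕ} {a : ℕ} (ha : a ∈ s) : a ∈ bad s :=
  mem_bad_of_eq ha ha ha rfl

lemma bad_mono {s t : Finset ℕ} (h : s ⊆ t) : bad s ⊆ bad t := by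
  apply Finset.union_subset_union
  · exact Finset.image_subset_image (Finset.product_subset_product h (Finset.sym2_mono h))
  · exact Finset.image_subset_image (Finset.offDiag_mono h)

lemma le_mul_self (t : ℕ) : t ≤ t * t := by
  cases t with
  | zero => simp
  | succ p => exact Nat.le_mul_of_pos_left _ (Nat.succ_pos p)

lemma arith_aux (n k : ℕ) (h : 2 * k = n * n + n) :
    n * k + (n * n - n) ≤ n ^ 3 := by
  have h5 : 3 * (n * n) ≤ n * n * n + 2 * n := by
    induction n with
    | zero => simp
    | succ m ih => nlinarith [ih, le_mul_self m]
  have hn : n ≤ n * n := le_mul_self n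
  have h3 : 2 * (n * k) = n * n * n + n * n := by
    calc 2 * (n * k) = n * (2 * k) := by ring
      _ = n * (n * n + n) := by rw [h]
      _ = n * n * n + n * n := by ring
  have hcube : n ^ 3 = n * n * n := by ring
  omega

lemma card_bad_le (s : Finset ℕ) : (bad s).card ≤ s.card ^ 3 := by
  have h1 : (((s ×ˢ s.sym2).image fun p => pairSum p.2 - p.1)).card
      ≤ s.card * ((s.card + 1) * s.card / 2) := by
    calc (((s ×ˢ s.sym2).image fun p => pairSum p.2 - p.1)).card
        ≤ (s ×ˢ s.sym2).card := Finset.card_image_le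
      _ = s.card * s.sym2.card := by rw [Finset.card_product]
      _ = s.card * ((s.card + 1) * s.card / 2) := by
          rw [Finset.card_sym2, Nat.choose_two_right, Nat.add_sub_cancel]
  have h2 : ((s.offDiag.image fun p => (p.1 + p.2) / 2)).card ≤ s.card * s.card - s.card := by
    calc ((s.offDiag.image fun p => (p.1 + p.2) / 2)).card
        ≤ s.offDiag.card := Finset.card_image_le
      _ = s.card * s.card - s.card := Finset.offDiag_card s
  have h3 : (bad s).card ≤ s.card * ((s.card + 1) * s.card / 2) + (s.card * s.card - s.card) :=
    le_trans (Finset.card_union_le _ _) (Nat.add_le_add h1 h2)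
  refine le_trans h3 ?_
  set n := s.card with hn
  have hdvd : 2 ∣ (n + 1) * n := by
    rcases Nat.even_or_odd n with he | ho
    · exact Dvd.dvd.mul_left he.two_dvd _
    · exact Dvd.dvd.mul_right (ho.add_one.two_dvd) _
  have hev : 2 * ((n + 1) * n / 2) = (n + 1) * n := Nat.mul_div_cancel' hdvd
  have hev2 : (n + 1) * n = n * n + n := by ring
  exact arith_aux n _ (by omega)

/-- The candidate values available at step with current set `s`. -/
def good (s : Finset ℕ) : Finset ℕ := Finset.Icc 1 (s.card ^ 3 + 1) \ bad s

lemma good_nonempty (s : Finset ℕ) : (good s).Nonempty := by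
  rw [← Finset.card_pos]
  have := Finset.le_card_sdiff (bad s) (Finset.Icc 1 (s.card ^ 3 + 1))
  have hIcc : (Finset.Icc 1 (s.card ^ 3 + 1)).card = s.card ^ 3 + 1 := by
    rw [Nat.card_Icc]; omega
  have := card_bad_le s
  unfold good
  omega

/-- The next greedy element. -/
def next (s : Finset ℕ) : ℕ := (good s).min' (good_nonempty s)

lemma next_mem_good (s : Finset ℕ) : next s ∈ good s := Finset.min'_mem _ _

lemma next_pos (s : Finset ℕ) : 1 ≤ next s := by
  have := next_mem_good s
  unfold good at this
  have := (Finset.mem_sdiff.1 this).1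
  exact (Finset.mem_Icc.1 this).1

lemma next_le (s : Finset ℕ) : next s ≤ s.card ^ 3 + 1 := by
  have := next_mem_good s
  unfold good at this
  have := (Finset.mem_sdiff.1 this).1
  exact (Finset.mem_Icc.1 this).2

lemma next_not_bad (s : Finset ℕ) : next s ∉ bad s := by
  have := next_mem_good s
  unfold good at this
  exact (Finset.mem_sdiff.1 this).2

lemma next_not_mem (s : Finset ℕ) : next s ∉ s :=
  fun h => next_not_bad s (self_mem_bad h)

/-- The greedy Sidon finsets. -/
def S : ℕ → Finset ℕ
  | 0 => ∅
  | n + 1 => insert (next (S n)) (S n)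

lemma S_subset_succ (n : ℕ) : S n ⊆ S (n + 1) := by
  intro x hx; exact Finset.mem_insert_of_mem hx

lemma S_mono : Monotone S := monotone_nat_of_le_succ S_subset_succ

lemma card_S_le (n : ℕ) : (S n).card ≤ n := by
  induction n with
  | zero => simp [S]
  | succ n ih =>
    calc (S (n + 1)).card ≤ (S n).card + 1 := Finset.card_insert_le _ _
      _ ≤ n + 1 := by omega

/-- Sidon property for finsets. -/
def SidonF (s : Finset ℕ) : Prop :=
  ∀ a ∈ s, ∀ b ∈ s, ∀ c ∈ s, ∀ d ∈ s, a + b = c + d → (a = c ∧ b = d) ∨ (a = d ∧ b = c)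

lemma sidonF_insert {s : Finset ℕ} {x : ℕ} (hs : SidonF s) (hx : x ∉ bad s) :
    SidonF (insert x s) := by
  have hxs : x ∉ s := fun h => hx (self_mem_bad h)
  -- no equation x + a = b + c with a,b,c ∈ s
  have K : ∀ a ∈ s, ∀ b ∈ s, ∀ c ∈ s, x + a ≠ b + c := by
    intro a ha b hb c hc h
    exact hx (mem_bad_of_eq ha hb hc h)
  -- no equation x + x = b + c with b,c ∈ s
  have K2 : ∀ b ∈ s, ∀ c ∈ s, x + x ≠ b + c := by
    intro b hb c hc h
    by_cases hbc : b = c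
    · subst hbc
      have : x = b := by omega
      exact hxs (this ▸ hb)
    · exact hx (mem_bad_mid hb hc hbc h)
  intro a ha b hb c hc d hd h
  rw [Finset.mem_insert] at ha hb hc hd
  rcases ha with ha | ha <;> rcases hb with hb | hb <;>
    rcases hc with hc | hc <;> rcases hd with hd | hd
  · left; exact ⟨by omega, by omega⟩
  · exact absurd (show x ∈ s by rw [show x = d from by omega]; exact hd) hxs
  · exact absurd (show x ∈ s by rw [show x = c from by omega]; exact hc) hxs
  · exact absurd (show x + x = c + d by omega) (K2 c hc d hd)
  · exact absurd (show x ∈ s by rw [show x = b from by omega]; exact hb) hxs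
  · left; exact ⟨by omega, by omega⟩
  · right; exact ⟨by omega, by omega⟩
  · exact absurd (show x + b = c + d by omega) (K b hb c hc d hd)
  · exact absurd (show x ∈ s by rw [show x = a from by omega]; exact ha) hxs
  · right; exact ⟨by omega, by omega⟩
  · left; exact ⟨by omega, by omega⟩
  · exact absurd (show x + a = c + d by omega) (K a ha c hc d hd)
  · exact absurd (show x + x = a + b by omega) (K2 a ha b hb)
  · exact absurd (show x + d = a + b by omega) (K d hd a ha b hb)
  · exact absurd (show x + c = a + b by omega) (K c hc a ha b hb)
  · exact hs a ha b hb c hc d hd h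

lemma sidonF_S (n : ℕ) : SidonF (S n) := by
  induction n with
  | zero => intro a ha; simp [S] at ha
  | succ n ih => exact sidonF_insert ih (next_not_bad (S n))

/-- The greedy sequence. -/
def a (k : ℕ) : ℕ := next (S (k - 1))

lemma a_mem_S {k : ℕ} (hk : 1 ≤ k) : a k ∈ S k := by
  obtain ⟨m, rfl⟩ := Nat.exists_eq_add_of_le hk
  show next (S (1 + m - 1)) ∈ S (1 + m)
  have h1 : 1 + m - 1 = m := by omega
  have h2 : 1 + m = m + 1 := by omega
  rw [h1, h2]
  exact Finset.mem_insert_self _ _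

lemma mem_S_iff {n : ℕ} {x : ℕ} : x ∈ S n ↔ ∃ k, 1 ≤ k ∧ k ≤ n ∧ x = a k := by
  induction n with
  | zero => simp [S]
  | succ n ih =>
    constructor
    · intro hx
      rcases Finset.mem_insert.1 hx with rfl | hx
      · exact ⟨n + 1, by omega, le_refl _, by simp [a]⟩
      · obtain ⟨k, h1, h2, h3⟩ := ih.1 hx
        exact ⟨k, h1, by omega, h3⟩
    · rintro ⟨k, h1, h2, rfl⟩
      rcases Nat.lt_or_ge k (n + 1) with h | h
      · exact S_subset_succ n (ih.2 ⟨k, h1, by omega, rfl⟩)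
      · have : k = n + 1 := by omega
        subst this
        show next (S (n + 1 - 1)) ∈ S (n + 1)
        simp only [Nat.add_sub_cancel]
        exact Finset.mem_insert_self _ _

lemma a_lt_succ {k : ℕ} (hk : 1 ≤ k) : a k < a (k + 1) := by
  have hsub : S (k - 1) ⊆ S k := S_mono (by omega)
  have hk1 : k + 1 - 1 = k := by omega
  have hx : a (k + 1) = next (S k) := by rw [a, hk1]
  -- a k ∈ S k ⊆ bad (S k), next (S k) ∉ bad (S k), so they differ
  have hne : a (k + 1) ≠ a k := by
    rw [hx]
    intro e
    exact next_not_bad (S k) (e ▸ self_mem_bad (a_mem_S hk))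
  -- suppose a (k+1) < a k : then a (k+1) ∈ good (S (k-1)), contradicting minimality
  by_contra hlt
  push_neg at hlt
  have hlt' : a (k + 1) < a k := lt_of_le_of_ne hlt hne
  have h1 : a (k + 1) ∈ good (S (k - 1)) := by
    rw [hx]
    unfold good
    rw [Finset.mem_sdiff]
    constructor
    · rw [Finset.mem_Icc]
      refine ⟨next_pos _, ?_⟩
      have hak : a k ≤ (S (k - 1)).card ^ 3 + 1 := next_le _
      omega
    · intro hb
      exact next_not_bad (S k) (bad_mono hsub hb)
  have := Finset.min'_le _ _ h1
  have : a k ≤ a (k + 1) := this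
  omega

lemma a_strict : ∀ m k : ℕ, 1 ≤ k → a k < a (k + 1 + m) := by
  intro m
  induction m with
  | zero => exact fun k hk => a_lt_succ hk
  | succ m ih =>
    intro k hk
    have h1 := ih k hk
    have h2 : a (k + 1 + m) < a (k + 1 + m + 1) := a_lt_succ (by omega)
    have : k + 1 + (m + 1) = k + 1 + m + 1 := by omega
    rw [this]
    omega

end GreedySidon

theorem stmt5 :
    ∃ a : ℕ → ℕ,
      StrictMonoOn a (Set.Ici 1) ∧
      (∀ k : ℕ, 1 ≤ k → 0 < a k) ∧
      IsSidon (a '' Set.Ici 1) ∧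
      (∀ k : ℕ, 1 ≤ k → a k ≤ (k - 1) ^ 3 + 1) := by
  refine ⟨GreedySidon.a, ?_, ?_, ?_, ?_⟩
  · intro j hj k hk hjk
    have hj1 : 1 ≤ j := hj
    obtain ⟨m, rfl⟩ := Nat.exists_eq_add_of_lt hjk
    have e : j + m + 1 = j + 1 + m := by omega
    rw [e]
    exact GreedySidon.a_strict m j hj1
  · intro k _
    exact GreedySidon.next_pos _
  · intro x hx y hy z hz w hw h
    -- each element lies in some S n
    have key : ∀ u ∈ GreedySidon.a '' Set.Ici 1, ∃ n, u ∈ GreedySidon.S n := by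
      rintro u ⟨k, hk, rfl⟩
      exact ⟨k, GreedySidon.a_mem_S hk⟩
    obtain ⟨n1, h1⟩ := key x hx
    obtain ⟨n2, h2⟩ := key y hy
    obtain ⟨n3, h3⟩ := key z hz
    obtain ⟨n4, h4⟩ := key w hw
    set N := max (max n1 n2) (max n3 n4) with hN
    have m1 : x ∈ GreedySidon.S N := GreedySidon.S_mono (by omega) h1
    have m2 : y ∈ GreedySidon.S N := GreedySidon.S_mono (by omega) h2
    have m3 : z ∈ GreedySidon.S N := GreedySidon.S_mono (by omega) h3
    have m4 : w ∈ GreedySidon.S N := GreedySidon.S_mono (by omega) h4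
    exact GreedySidon.sidonF_S N x m1 y m2 z m3 w m4 h
  · intro k hk
    have h1 : GreedySidon.a k ≤ (GreedySidon.S (k - 1)).card ^ 3 + 1 :=
      GreedySidon.next_le _
    have h2 : (GreedySidon.S (k - 1)).card ≤ k - 1 := GreedySidon.card_S_le _
    have h3 : (GreedySidon.S (k - 1)).card ^ 3 ≤ (k - 1) ^ 3 :=
      Nat.pow_le_pow_left h2 3
    omega
end

section
/- Let p, q, r, s be primes congruent to 1 modulo 4. If the quadruple (p,q,r,s) is bad, then t_p + t_q = t_r + t_s and Δ_{ip} + Δ_{iq} = Δ_{ir} + Δ_{is} for every integer i ≥ 1. Conversely, if t_p + t_q = t_r + t_s and Δ_{ip} + Δ_{iq} = Δ_{ir} + Δ_{is} for all i ≥ 1, then a_p + a_q = a_r + a_s. -/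
/-- `m_p := ⌊2^{K_p²}·α·φ_p⌋`. -/
noncomputable def mfun (φ : ℕ → ℝ) (Kp : ℕ → ℕ) (α : ℝ) (p : ℕ) : ℕ :=
  ⌊(2 : ℝ) ^ ((Kp p) ^ 2) * α * φ p⌋₊

/-- `δ_{ip}`: the binary digit of `m_p` of weight `2^{K_p² − i}` (for `1 ≤ i ≤ K_p²`). -/
noncomputable def dig (φ : ℕ → ℝ) (Kp : ℕ → ℕ) (α : ℝ) (i p : ℕ) : ℕ :=
  mfun φ Kp α p / 2 ^ ((Kp p) ^ 2 - i) % 2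

/-- `Δ_{ip} := Σ_{j=(i−1)²+1}^{i²} δ_{jp}·2^{i²−j}` for `1 ≤ i ≤ K_p`, and `0` for `i > K_p`. -/
noncomputable def Blk (φ : ℕ → ℝ) (Kp : ℕ → ℕ) (α : ℝ) (i p : ℕ) : ℕ :=
  if i ≤ Kp p then ∑ j ∈ Finset.Icc ((i - 1) ^ 2 + 1) (i ^ 2), dig φ Kp α j p * 2 ^ (i ^ 2 - j)
  else 0

/-- `t_p := 2^{K_p² + 3K_p + 2}`. -/
def tfun (Kp : ℕ → ℕ) (p : ℕ) : ℕ := 2 ^ ((Kp p) ^ 2 + 3 * Kp p + 2)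

/-- `a_p := Σ_{i=1}^{K_p} Δ_{ip}·2^{(i−1)²+3i} + t_p`. -/
noncomputable def afun (φ : ℕ → ℝ) (Kp : ℕ → ℕ) (α : ℝ) (p : ℕ) : ℕ :=
  (∑ i ∈ Finset.Icc 1 (Kp p), Blk φ Kp α i p * 2 ^ ((i - 1) ^ 2 + 3 * i)) + tfun Kp p

/-- A quadruple `(p,q,r,s)` is bad (w.r.t. `α`) if `a_p + a_q = a_r + a_s` and
`a_p > a_r ≥ a_s > a_q`. -/
noncomputable def IsBad (φ : ℕ → ℝ) (Kp : ℕ → ℕ) (α : ℝ) (p q r s : ℕ) : Prop :=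
  afun φ Kp α p + afun φ Kp α q = afun φ Kp α r + afun φ Kp α s ∧
  afun φ Kp α r < afun φ Kp α p ∧ afun φ Kp α s ≤ afun φ Kp α r ∧ afun φ Kp α q < afun φ Kp α s

/-- The hypothesis defining `φ_p = (1/π)·arctan(v_p/u_p)` for primes `p ≡ 1 (mod 4)`,
where `p = u_p² + v_p²` with `u_p > v_p > 0`. -/
def PhiHyp (u v : ℕ → ℕ) (φ : ℕ → ℝ) : Prop :=
  ∀ p : ℕ, p.Prime → p % 4 = 1 →
    0 < v p ∧ v p < u p ∧ p = (u p) ^ 2 + (v p) ^ 2 ∧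
    φ p = (1 / Real.pi) * Real.arctan ((v p : ℝ) / (u p : ℝ))

/-- The hypothesis defining `K_p`: the unique integer `K > 2` with
`2^{(K−2)²} < p^β < 2^{(K−1)²}`, for primes `p ≡ 1 (mod 4)`. -/
def KpHyp (β : ℝ) (Kp : ℕ → ℕ) : Prop :=
  ∀ p : ℕ, p.Prime → p % 4 = 1 →
    2 < Kp p ∧ (2 : ℝ) ^ ((Kp p - 2) ^ 2) < (p : ℝ) ^ β ∧
      (p : ℝ) ^ β < (2 : ℝ) ^ ((Kp p - 1) ^ 2)

/-!
The exponents `e_i = (i-1)² + 3i` cut a binary expansion into slots of width at least `2i+2`: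
`a_p = ∑ Δ_{ip} 2^{e_i} + t_p` with `Δ_{ip} < 2^{2i}`, and `t_p = 2^{2K_p+1} · 2^{e_{K_p}}` is
the top bit of slot `K_p`. Hence `t_p ≤ a_p < 3 t_p`, while `t` grows at least sixteenfold when
`K` increases, so `a_p > a_r ≥ a_s` forces `K_p = K_r`, i.e. `t_p = t_r`. After cancelling
`t_p = t_r`, the slot digits `Δ_{ip} + Δ_{iq} + [i = K_q] 2^{2i+1}` on either side are all below
`2^{2i+2}`: no carries occur, so the digits agree slot by slot. In slot `K_s` this forces
`K_q = K_s`, and then `Δ_{ip} + Δ_{iq} = Δ_{ir} + Δ_{is}` for every `i`.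
-/

open Finset

namespace Nat

variable {b n : ℕ} {w c d : ℕ → ℕ}

theorem sum_mul_two_pow_sub_lt (hc : ∀ j, c j ≤ 1) (m k : ℕ) :
    ∑ j ∈ Icc (m + 1) k, c j * 2 ^ (k - j) < 2 ^ (k - m) := by
  have hinj : Set.InjOn (k - ·) (Icc (m + 1) k : Set ℕ) := by
    intro j hj k hk hjk
    simp only [coe_Icc, Set.mem_Icc] at hj hk hjk
    omega
  calc ∑ j ∈ Icc (m + 1) k, c j * 2 ^ (k - j)
      ≤ ∑ j ∈ Icc (m + 1) k, 2 ^ (k - j) :=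
        sum_le_sum fun j _ => (Nat.mul_le_mul_right _ (hc j)).trans_eq (one_mul _)
    _ = ∑ e ∈ (Icc (m + 1) k).image (k - ·), 2 ^ e := (sum_image hinj).symm
    _ < 2 ^ (k - m) := Nat.geomSum_lt le_rfl fun e he => by
        obtain ⟨j, hj, rfl⟩ := mem_image.1 he
        rw [mem_Icc] at hj
        omega

theorem sum_mul_pow_lt_pow (hb : 0 < b) (hw : Monotone w)
    (hc : ∀ i < n, c i < b ^ (w (i + 1) - w i)) :
    ∑ i ∈ range n, c i * b ^ w i < b ^ w n := by
  induction n with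
  | zero => simpa using Nat.pow_pos hb
  | succ n ih =>
    calc ∑ i ∈ range (n + 1), c i * b ^ w i
        = ∑ i ∈ range n, c i * b ^ w i + c n * b ^ w n := sum_range_succ _ _
      _ < b ^ w n + c n * b ^ w n := by
        gcongr; exact ih fun i hi => hc i (hi.trans n.lt_succ_self)
      _ = (c n + 1) * b ^ w n := by ring
      _ ≤ b ^ (w (n + 1) - w n) * b ^ w n := by gcongr; exact hc n n.lt_succ_self
      _ = b ^ w (n + 1) := by rw [← pow_add, Nat.sub_add_cancel (hw n.le_succ)]

theorem eq_of_sum_mul_pow_eq (hb : 0 < b) (hw : Monotone w)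
    (hc : ∀ i < n, c i < b ^ (w (i + 1) - w i)) (hd : ∀ i < n, d i < b ^ (w (i + 1) - w i))
    (h : ∑ i ∈ range n, c i * b ^ w i = ∑ i ∈ range n, d i * b ^ w i) :
    ∀ i < n, c i = d i := by
  induction n with
  | zero => simp
  | succ n ih =>
    have hc' : ∀ i < n, c i < b ^ (w (i + 1) - w i) := fun i hi => hc i (hi.trans n.lt_succ_self)
    have hd' : ∀ i < n, d i < b ^ (w (i + 1) - w i) := fun i hi => hd i (hi.trans n.lt_succ_self)
    have hlc := sum_mul_pow_lt_pow hb hw hc'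
    have hld := sum_mul_pow_lt_pow hb hw hd'
    rw [sum_range_succ, sum_range_succ] at h
    have hlow := congrArg (· % b ^ w n) h
    have hhigh := congrArg (· / b ^ w n) h
    simp only [Nat.add_mul_mod_self_right, Nat.mod_eq_of_lt hlc, Nat.mod_eq_of_lt hld] at hlow
    simp only [Nat.add_mul_div_right _ _ (Nat.pow_pos hb), Nat.div_eq_of_lt hlc,
      Nat.div_eq_of_lt hld, zero_add] at hhigh
    intro i hi
    rcases Nat.lt_succ_iff_lt_or_eq.1 hi with hi | rfl
    · exact ih hc' hd' hlow i hi
    · exact hhigh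

end Nat

def slotExp (i : ℕ) : ℕ := (i - 1) ^ 2 + 3 * i

theorem two_mul_add_two_le_slotExp_succ_sub (i : ℕ) :
    2 * i + 2 ≤ slotExp (i + 1) - slotExp i := by
  rcases i with _ | i
  · simp [slotExp]
  · simp only [slotExp, Nat.add_sub_cancel]; ring_nf; omega

theorem slotExp_monotone : Monotone slotExp :=
  monotone_nat_of_le_succ fun i => by
    have := two_mul_add_two_le_slotExp_succ_sub i; omega

section Blocks

variable {φ : ℕ → ℝ} {Kp : ℕ → ℕ} {α : ℝ} {i x y p q r s : ℕ}

theorem Blk_zero : Blk φ Kp α 0 x = 0 := by simp [Blk]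

theorem Blk_eq_zero_of_lt (h : Kp x < i) : Blk φ Kp α i x = 0 := by
  rw [Blk, if_neg (by omega)]

theorem Blk_lt : Blk φ Kp α i x < 2 ^ (2 * i) := by
  unfold Blk
  split_ifs
  · refine (Nat.sum_mul_two_pow_sub_lt (fun j => Nat.le_of_lt_succ (Nat.mod_lt _ two_pos))
      _ _).trans_le (Nat.pow_le_pow_right two_pos ?_)
    rcases i with _ | i
    · simp
    · simp only [Nat.add_sub_cancel]; ring_nf; omega
  · positivity

theorem tfun_mul_two (x : ℕ) : tfun Kp x * 2 = 2 ^ slotExp (Kp x + 1) := by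
  rw [tfun, slotExp, ← pow_succ]; congr 1

theorem tfun_eq_two_pow_mul (h : 1 ≤ Kp x) :
    tfun Kp x = 2 ^ (2 * Kp x + 1) * 2 ^ slotExp (Kp x) := by
  obtain ⟨K, hK⟩ : ∃ K, Kp x = K + 1 := ⟨Kp x - 1, by omega⟩
  rw [tfun, slotExp, ← pow_add, hK]; congr 1; simp; ring

theorem sixteen_mul_tfun_le (h : Kp x < Kp y) : 16 * tfun Kp x ≤ tfun Kp y := by
  rw [tfun, tfun, show (16 : ℕ) = 2 ^ 4 by norm_num, ← pow_add]
  exact Nat.pow_le_pow_right (by norm_num) (by nlinarith)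

theorem afun_eq_sum_range {N : ℕ} (hN : Kp x < N) :
    afun φ Kp α x = ∑ i ∈ range N, Blk φ Kp α i x * 2 ^ slotExp i + tfun Kp x := by
  rw [afun]
  congr 1
  refine sum_subset (fun i hi => ?_) fun i hiN hi => ?_
  · simp only [mem_Icc, mem_range] at hi ⊢; omega
  · simp only [mem_Icc, mem_range, not_and_or, not_le] at hiN hi
    rcases hi with hi | hi
    · rw [show i = 0 by omega, Blk_zero, zero_mul]
    · rw [Blk_eq_zero_of_lt hi, zero_mul]

theorem tfun_le_afun : tfun Kp x ≤ afun φ Kp α x := Nat.le_add_left _ _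

theorem afun_lt_three_mul_tfun : afun φ Kp α x < 3 * tfun Kp x := by
  have hsum :
      ∑ i ∈ range (Kp x + 1), Blk φ Kp α i x * 2 ^ slotExp i < 2 ^ slotExp (Kp x + 1) :=
    Nat.sum_mul_pow_lt_pow two_pos slotExp_monotone fun i _ =>
      Blk_lt.trans_le (Nat.pow_le_pow_right two_pos
        ((two_mul_add_two_le_slotExp_succ_sub i).trans' (by omega)))
  have := tfun_mul_two (Kp := Kp) x
  rw [afun_eq_sum_range (lt_add_one (Kp x))]
  omega

theorem Kp_le_of_afun_le (h : afun φ Kp α y ≤ afun φ Kp α x) : Kp y ≤ Kp x := by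
  by_contra! hlt
  have := sixteen_mul_tfun_le (Kp := Kp) hlt
  have : tfun Kp y ≤ afun φ Kp α y := tfun_le_afun
  have : afun φ Kp α x < 3 * tfun Kp x := afun_lt_three_mul_tfun
  omega

theorem Kp_eq_of_isBad (h : IsBad φ Kp α p q r s) : Kp p = Kp r := by
  obtain ⟨hsum, hrp, hsr, -⟩ := h
  refine le_antisymm (not_lt.1 fun hlt => ?_) (Kp_le_of_afun_le hrp.le)
  have := sixteen_mul_tfun_le (Kp := Kp) hlt
  have : tfun Kp p ≤ afun φ Kp α p := tfun_le_afun
  have : afun φ Kp α r < 3 * tfun Kp r := afun_lt_three_mul_tfun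
  omega

noncomputable def pairDigit (φ : ℕ → ℝ) (Kp : ℕ → ℕ) (α : ℝ) (x y i : ℕ) : ℕ :=
  Blk φ Kp α i x + Blk φ Kp α i y + if i = Kp y then 2 ^ (2 * i + 1) else 0

theorem pairDigit_lt : pairDigit φ Kp α x y i < 2 ^ (slotExp (i + 1) - slotExp i) := by
  refine lt_of_lt_of_le ?_ (Nat.pow_le_pow_right two_pos (two_mul_add_two_le_slotExp_succ_sub i))
  have hx : Blk φ Kp α i x < 2 ^ (2 * i) := Blk_lt
  have hy : Blk φ Kp α i y < 2 ^ (2 * i) := Blk_lt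
  have h1 : 2 ^ (2 * i + 1) = 2 * 2 ^ (2 * i) := by ring
  have h2 : 2 ^ (2 * i + 2) = 4 * 2 ^ (2 * i) := by ring
  unfold pairDigit
  split_ifs <;> omega

theorem afun_add_afun_eq_sum_pairDigit {N : ℕ} (hy : 1 ≤ Kp y) (hxN : Kp x < N)
    (hyN : Kp y < N) :
    afun φ Kp α x + afun φ Kp α y =
      ∑ i ∈ range N, pairDigit φ Kp α x y i * 2 ^ slotExp i + tfun Kp x := by
  have ht : ∑ i ∈ range N, (if i = Kp y then 2 ^ (2 * i + 1) else 0) * 2 ^ slotExp i =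
      tfun Kp y := by
    simp only [ite_mul, zero_mul, sum_ite_eq', mem_range, if_pos hyN, tfun_eq_two_pow_mul hy]
  rw [afun_eq_sum_range hxN, afun_eq_sum_range hyN, ← ht]
  simp only [pairDigit, add_mul, sum_add_distrib]
  ring

theorem Kp_eq_and_Blk_add_eq_of_afun_add_eq (hq : 1 ≤ Kp q) (hs : 1 ≤ Kp s)
    (ht : tfun Kp p = tfun Kp r)
    (h : afun φ Kp α p + afun φ Kp α q = afun φ Kp α r + afun φ Kp α s) :
    Kp q = Kp s ∧
      ∀ i, Blk φ Kp α i p + Blk φ Kp α i q = Blk φ Kp α i r + Blk φ Kp α i s := by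
  set N := max (max (Kp p) (Kp q)) (max (Kp r) (Kp s)) + 1
  rw [afun_add_afun_eq_sum_pairDigit (N := N) hq (by omega) (by omega),
    afun_add_afun_eq_sum_pairDigit (N := N) hs (by omega) (by omega), ht] at h
  have hdigit : ∀ i < N, pairDigit φ Kp α p q i = pairDigit φ Kp α r s i :=
    Nat.eq_of_sum_mul_pow_eq two_pos slotExp_monotone (fun _ _ => pairDigit_lt)
      (fun _ _ => pairDigit_lt) (Nat.add_right_cancel h)
  have hqs : Kp q = Kp s := by
    by_contra hne
    have key := hdigit (Kp s) (by omega)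
    have : Blk φ Kp α (Kp s) p < 2 ^ (2 * Kp s) := Blk_lt
    have : Blk φ Kp α (Kp s) q < 2 ^ (2 * Kp s) := Blk_lt
    have h1 : 2 ^ (2 * Kp s + 1) = 2 * 2 ^ (2 * Kp s) := by ring
    simp only [pairDigit, if_neg (Ne.symm hne), ↓reduceIte] at key
    omega
  refine ⟨hqs, fun i => ?_⟩
  by_cases hi : i < N
  · have key := hdigit i hi
    simp only [pairDigit, hqs] at key
    omega
  · simp only [Blk_eq_zero_of_lt (show Kp p < i by omega),
      Blk_eq_zero_of_lt (show Kp q < i by omega), Blk_eq_zero_of_lt (show Kp r < i by omega),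
      Blk_eq_zero_of_lt (show Kp s < i by omega)]

theorem afun_add_eq_of_tfun_add_eq (ht : tfun Kp p + tfun Kp q = tfun Kp r + tfun Kp s)
    (hBlk : ∀ i, 1 ≤ i →
      Blk φ Kp α i p + Blk φ Kp α i q = Blk φ Kp α i r + Blk φ Kp α i s) :
    afun φ Kp α p + afun φ Kp α q = afun φ Kp α r + afun φ Kp α s := by
  set N := max (max (Kp p) (Kp q)) (max (Kp r) (Kp s)) + 1
  have hsum : ∀ x y, Kp x < N → Kp y < N → afun φ Kp α x + afun φ Kp α y =
      ∑ i ∈ range N, (Blk φ Kp α i x + Blk φ Kp α i y) * 2 ^ slotExp i +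
        (tfun Kp x + tfun Kp y) := by
    intro x y hx hy
    rw [afun_eq_sum_range hx, afun_eq_sum_range hy]
    simp only [add_mul, sum_add_distrib]
    ring
  rw [hsum p q (by omega) (by omega), hsum r s (by omega) (by omega), ht]
  congr 1
  refine sum_congr rfl fun i _ => ?_
  rcases Nat.eq_zero_or_pos i with rfl | hi
  · simp only [Blk_zero]
  · rw [hBlk i hi]

end Blocks

theorem stmt6_general (β α : ℝ)
    (Kp : ℕ → ℕ) (φ : ℕ → ℝ) (hKp : KpHyp β Kp)
    (p q r s : ℕ)
    (hq : q.Prime) (hq4 : q % 4 = 1)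
    (hs : s.Prime) (hs4 : s % 4 = 1) :
    (IsBad φ Kp α p q r s →
      tfun Kp p + tfun Kp q = tfun Kp r + tfun Kp s ∧
      ∀ i : ℕ, 1 ≤ i →
        Blk φ Kp α i p + Blk φ Kp α i q = Blk φ Kp α i r + Blk φ Kp α i s) ∧
    ((tfun Kp p + tfun Kp q = tfun Kp r + tfun Kp s ∧
      ∀ i : ℕ, 1 ≤ i →
        Blk φ Kp α i p + Blk φ Kp α i q = Blk φ Kp α i r + Blk φ Kp α i s) →
      afun φ Kp α p + afun φ Kp α q = afun φ Kp α r + afun φ Kp α s) := by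
  refine ⟨fun hbad => ?_, fun ⟨ht, hBlk⟩ => afun_add_eq_of_tfun_add_eq ht hBlk⟩
  have hpr : Kp p = Kp r := Kp_eq_of_isBad hbad
  have hq1 : 1 ≤ Kp q := (hKp q hq hq4).1.le.trans' one_le_two
  have hs1 : 1 ≤ Kp s := (hKp s hs hs4).1.le.trans' one_le_two
  obtain ⟨hqs, hBlk⟩ :=
    Kp_eq_and_Blk_add_eq_of_afun_add_eq hq1 hs1 (by rw [tfun, tfun, hpr]) hbad.1
  exact ⟨by rw [tfun, tfun, tfun, tfun, hpr, hqs], fun i _ => hBlk i⟩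

theorem stmt6 (β α : ℝ) (hβ : 2 < β) (hα : α ∈ Set.Ico (1 : ℝ) 2)
    (u v Kp : ℕ → ℕ) (φ : ℕ → ℝ) (hφ : PhiHyp u v φ) (hKp : KpHyp β Kp)
    (p q r s : ℕ)
    (hp : p.Prime) (hp4 : p % 4 = 1)
    (hq : q.Prime) (hq4 : q % 4 = 1)
    (hr : r.Prime) (hr4 : r % 4 = 1)
    (hs : s.Prime) (hs4 : s % 4 = 1) :
    (IsBad φ Kp α p q r s →
      tfun Kp p + tfun Kp q = tfun Kp r + tfun Kp s ∧
      ∀ i : ℕ, 1 ≤ i →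
        Blk φ Kp α i p + Blk φ Kp α i q = Blk φ Kp α i r + Blk φ Kp α i s) ∧
    ((tfun Kp p + tfun Kp q = tfun Kp r + tfun Kp s ∧
      ∀ i : ℕ, 1 ≤ i →
        Blk φ Kp α i p + Blk φ Kp α i q = Blk φ Kp α i r + Blk φ Kp α i s) →
      afun φ Kp α p + afun φ Kp α q = afun φ Kp α r + afun φ Kp α s) :=
  stmt6_general β α Kp φ hKp p q r s hq hq4 hs hs4
end

section
/- Let z₀ be a Gaussian integer, let R > 0 and 0 < θ ≤ 2π be real numbers, and let W be a finite set of Gaussian integers with z₀ ∉ W such that: (i) |w − z₀| ≤ R for every w ∈ W; (ii) there is a real θ₀ such that the argument of w − z₀ lies in [θ₀, θ₀ + θ] for every w ∈ W; and (iii) no two distinct elements w, w′ ∈ W satisfy w − z₀ = λ·(w′ − z₀) for some positive real λ. Then |W| ≤ θ·R² + 1. -/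
/-!
Write `w - z₀ = ρ_w e^{i t_w}`. For two of these lattice vectors with `t < t'`, the cross
product `Im (conj u * v) = ρ ρ' sin (t' - t)` is an integer. If it is nonzero, then
`1 ≤ ρ ρ' |sin (t' - t)| ≤ ρ ρ' (t' - t)`; if it vanishes, then `t' - t ≥ π` and `ρ, ρ' ≥ 1`.
Either way `t' - t ≥ 1/R²`, and equal angles are excluded because the rays are distinct. So the
angles `t_w` are `1/R²`-separated in an interval of length `θ`, and there are at most
`θ R² + 1` of them.
-/

open Complex ComplexConjugate GaussianInt

theorem Finset.card_le_div_add_one_of_separated {ι : Type*} {s : Finset ι} (f : ι → ℝ)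
    {a L δ : ℝ} (hL : 0 ≤ L) (hδ : 0 < δ) (hf : ∀ i ∈ s, f i ∈ Set.Icc a (a + L))
    (hsep : ∀ i ∈ s, ∀ j ∈ s, i ≠ j → f i ≤ f j → δ ≤ f j - f i) :
    (s.card : ℝ) ≤ L / δ + 1 := by
  set g : ι → ℕ := fun i ↦ ⌊(f i - a) / δ⌋₊
  have hmaps : Set.MapsTo g s (Finset.range (⌊L / δ⌋₊ + 1)) := fun i hi ↦ by
    have := hf i hi
    simp only [coe_range, Set.mem_Iio, Nat.lt_succ_iff, g]
    exact Nat.floor_le_floor (div_le_div_of_nonneg_right (by linarith [this.2]) hδ.le)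
  have hinj : Set.InjOn g s := by
    intro i hi j hj hij
    by_contra hne
    have hfi := (hf i hi).1
    have hfj := (hf j hj).1
    have hclose : |(f i - a) / δ - (f j - a) / δ| < 1 := by
      refine Int.abs_sub_lt_one_of_floor_eq_floor ?_
      rw [← Int.natCast_floor_eq_floor (div_nonneg (sub_nonneg.2 hfi) hδ.le),
        ← Int.natCast_floor_eq_floor (div_nonneg (sub_nonneg.2 hfj) hδ.le)]
      exact congrArg _ hij
    rw [← sub_div, abs_div, abs_of_pos hδ, div_lt_one hδ, abs_lt] at hclose
    rcases le_total (f i) (f j) with h | h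
    · linarith [hsep i hi j hj hne h]
    · linarith [hsep j hj i hi (Ne.symm hne) h]
  calc (s.card : ℝ) ≤ (⌊L / δ⌋₊ + 1 : ℕ) := by
        exact_mod_cast (Finset.card_le_card_of_injOn g hmaps hinj).trans (card_range _).le
    _ ≤ L / δ + 1 := by push_cast; linarith [Nat.floor_le (div_nonneg hL hδ.le)]

lemma Complex.norm_ofReal_mul_exp_mul_I {ρ : ℝ} (hρ : 0 ≤ ρ) (t : ℝ) :
    ‖(ρ : ℂ) * exp (t * I)‖ = ρ := by
  rw [norm_mul, norm_exp_ofReal_mul_I, mul_one, norm_real, Real.norm_of_nonneg hρ]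

lemma Complex.im_conj_mul_polar (ρ ρ' t t' : ℝ) :
    (conj ((ρ : ℂ) * exp (t * I)) * ((ρ' : ℂ) * exp (t' * I))).im =
      ρ * ρ' * Real.sin (t' - t) := by
  have : conj ((ρ : ℂ) * exp (t * I)) * ((ρ' : ℂ) * exp (t' * I)) =
      ((ρ * ρ' : ℝ) : ℂ) * exp ((t' - t : ℝ) * I) := by
    rw [map_mul, conj_ofReal, ← exp_conj, map_mul, conj_ofReal, conj_I, mul_mul_mul_comm,
      ← exp_add]
    push_cast
    ring_nf
  rw [this, im_ofReal_mul, exp_ofReal_mul_I_im]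

namespace GaussianInt

lemma one_le_norm_toComplex {x : GaussianInt} (hx : x ≠ 0) : 1 ≤ ‖(x : ℂ)‖ := by
  have h : (1 : ℝ) ≤ ‖(x : ℂ)‖ ^ 2 := by
    rw [Complex.sq_norm, ← intCast_real_norm]
    exact_mod_cast norm_pos.2 hx
  nlinarith [_root_.norm_nonneg (x : ℂ)]

lemma one_le_abs_im_conj_mul {x y : GaussianInt} (h : (conj (x : ℂ) * y).im ≠ 0) :
    1 ≤ |(conj (x : ℂ) * y).im| := by
  rw [← toComplex_star, ← toComplex_mul, ← intCast_im] at h ⊢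
  exact_mod_cast Int.one_le_abs (by exact_mod_cast h)

lemma one_le_of_toComplex_eq_polar {x : GaussianInt} {ρ t : ℝ} (hρ : 0 < ρ)
    (hx : (x : ℂ) = ρ * exp (t * I)) : 1 ≤ ρ := by
  have hnorm : ‖(x : ℂ)‖ = ρ := by rw [hx, Complex.norm_ofReal_mul_exp_mul_I hρ.le]
  refine hnorm ▸ one_le_norm_toComplex ?_
  rintro rfl
  simp only [toComplex_zero, norm_zero] at hnorm
  exact hρ.ne hnorm

theorem one_le_mul_mul_sub_of_polar {x y : GaussianInt} {ρ ρ' t t' : ℝ} (hρ : 0 < ρ)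
    (hρ' : 0 < ρ') (hx : (x : ℂ) = ρ * exp (t * I)) (hy : (y : ℂ) = ρ' * exp (t' * I))
    (htt' : t < t') : 1 ≤ ρ * ρ' * (t' - t) := by
  have hcross := Complex.im_conj_mul_polar ρ ρ' t t'
  rw [← hx, ← hy] at hcross
  by_cases hsin : Real.sin (t' - t) = 0
  · have hπ : Real.pi ≤ t' - t := by
      by_contra! h
      exact (Real.sin_pos_of_pos_of_lt_pi (sub_pos.2 htt') h).ne' hsin
    calc 1 ≤ 1 * 1 * Real.pi := by linarith [Real.pi_gt_three]
      _ ≤ ρ * ρ' * (t' - t) := by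
        gcongr
        exacts [one_le_of_toComplex_eq_polar hρ hx, one_le_of_toComplex_eq_polar hρ' hy]
  · calc 1 ≤ |(conj (x : ℂ) * y).im| :=
          one_le_abs_im_conj_mul (by simpa [hcross, hρ.ne', hρ'.ne'])
      _ = ρ * ρ' * |Real.sin (t' - t)| := by rw [hcross, abs_mul, abs_of_pos (by positivity)]
      _ ≤ ρ * ρ' * (t' - t) := by
        gcongr
        simpa [abs_of_pos (sub_pos.2 htt')] using Real.abs_sin_le_abs (x := t' - t)

theorem one_div_sq_le_sub_of_polar {x y : GaussianInt} {R ρ ρ' t t' : ℝ} (hR : 0 < R)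
    (hρ : 0 < ρ) (hρ' : 0 < ρ') (hx : (x : ℂ) = ρ * exp (t * I))
    (hy : (y : ℂ) = ρ' * exp (t' * I)) (hxR : ‖(x : ℂ)‖ ≤ R) (hyR : ‖(y : ℂ)‖ ≤ R)
    (htt' : t < t') : 1 / R ^ 2 ≤ t' - t := by
  rw [hx, Complex.norm_ofReal_mul_exp_mul_I hρ.le] at hxR
  rw [hy, Complex.norm_ofReal_mul_exp_mul_I hρ'.le] at hyR
  have hpos : 0 ≤ t' - t := (sub_pos.2 htt').le
  rw [div_le_iff₀' (by positivity)]
  calc 1 ≤ ρ * ρ' * (t' - t) := one_le_mul_mul_sub_of_polar hρ hρ' hx hy htt'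
    _ ≤ R ^ 2 * (t' - t) := by rw [sq]; gcongr

end GaussianInt

theorem stmt9_general (z₀ : ℂ) (hz₀ : ∃ a b : ℤ, z₀ = (a : ℂ) + (b : ℂ) * Complex.I)
    (R θ : ℝ) (hR : 0 < R) (hθ : 0 < θ)
    (W : Finset ℂ) (hW : ∀ w ∈ W, ∃ a b : ℤ, w = (a : ℂ) + (b : ℂ) * Complex.I)
    (hrad : ∀ w ∈ W, ‖w - z₀‖ ≤ R)
    (θ₀ : ℝ)
    (harg : ∀ w ∈ W, ∃ ρ t : ℝ, 0 < ρ ∧ θ₀ ≤ t ∧ t ≤ θ₀ + θ ∧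
      w - z₀ = (ρ : ℂ) * Complex.exp ((t : ℂ) * Complex.I))
    (hray : ∀ w ∈ W, ∀ w' ∈ W, w ≠ w' → ∀ l : ℝ, 0 < l → w - z₀ ≠ (l : ℂ) * (w' - z₀)) :
    (W.card : ℝ) ≤ θ * R ^ 2 + 1 := by
  choose! ρ t hρ ht₀ ht₁ hpolar using harg
  have hlift : ∀ w ∈ W, ∃ x : GaussianInt, (x : ℂ) = w - z₀ := by
    obtain ⟨a₀, b₀, rfl⟩ := hz₀
    intro w hw
    obtain ⟨a, b, rfl⟩ := hW w hw
    exact ⟨⟨a - a₀, b - b₀⟩, by rw [toComplex_def']; push_cast; ring⟩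
  have hsep : ∀ w ∈ W, ∀ w' ∈ W, w ≠ w' → t w ≤ t w' → 1 / R ^ 2 ≤ t w' - t w := by
    intro w hw w' hw' hne hle
    obtain hlt | heq := hle.lt_or_eq
    · obtain ⟨x, hx⟩ := hlift w hw
      obtain ⟨y, hy⟩ := hlift w' hw'
      exact one_div_sq_le_sub_of_polar hR (hρ w hw) (hρ w' hw') (hx.trans (hpolar w hw))
        (hy.trans (hpolar w' hw')) (hx ▸ hrad w hw) (hy ▸ hrad w' hw') hlt
    · refine absurd ?_ (hray w hw w' hw' hne (ρ w / ρ w') (div_pos (hρ w hw) (hρ w' hw')))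
      rw [hpolar w hw, hpolar w' hw', heq, ← mul_assoc, ← ofReal_mul,
        div_mul_cancel₀ _ (hρ w' hw').ne']
  simpa only [one_div, div_inv_eq_mul] using Finset.card_le_div_add_one_of_separated t hθ.le
    (by positivity : 0 < 1 / R ^ 2) (fun w hw ↦ ⟨ht₀ w hw, ht₁ w hw⟩) hsep

theorem stmt9 (z₀ : ℂ) (hz₀ : ∃ a b : ℤ, z₀ = (a : ℂ) + (b : ℂ) * Complex.I)
    (R θ : ℝ) (hR : 0 < R) (hθ : 0 < θ) (hθ2 : θ ≤ 2 * Real.pi)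
    (W : Finset ℂ) (hW : ∀ w ∈ W, ∃ a b : ℤ, w = (a : ℂ) + (b : ℂ) * Complex.I)
    (hz₀W : z₀ ∉ W)
    (hrad : ∀ w ∈ W, ‖w - z₀‖ ≤ R)
    (θ₀ : ℝ)
    (harg : ∀ w ∈ W, ∃ ρ t : ℝ, 0 < ρ ∧ θ₀ ≤ t ∧ t ≤ θ₀ + θ ∧
      w - z₀ = (ρ : ℂ) * Complex.exp ((t : ℂ) * Complex.I))
    (hray : ∀ w ∈ W, ∀ w' ∈ W, w ≠ w' → ∀ l : ℝ, 0 < l → w - z₀ ≠ (l : ℂ) * (w' - z₀)) :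
    (W.card : ℝ) ≤ θ * R ^ 2 + 1 :=
  stmt9_general z₀ hz₀ R θ hR hθ W hW hrad θ₀ harg hray
end

section
/- There exist a constant C > 0 and an integer L₀ (both depending only on β) such that: for all integers K > L ≥ L₀ and all primes p, r ∈ P_K with p ≠ r, if there exist primes q, s ∈ P_L and some α′ ∈ [1,2) for which the quadruple (p,q,r,s) is bad with respect to α′, then the Lebesgue measure of the set { α ∈ [1,2) : ⌊2^{K²}·α·φ_p⌋ ≡ ⌊2^{K²}·α·φ_r⌋ (mod 2^{K²−L²}) } is at most C·2^{L² − K²}. -/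
open Finset

/-- `m % 2^(a+b)` decomposes into high and low parts. -/
lemma mod_two_pow_add (m a b : ℕ) :
    m % 2 ^ (a + b) = 2 ^ a * (m / 2 ^ a % 2 ^ b) + m % 2 ^ a := by
  rw [pow_add]
  conv_lhs => rw [← Nat.div_add_mod (m % (2 ^ a * 2 ^ b)) (2 ^ a)]
  rw [Nat.mod_mul_right_div_self, Nat.mod_mod_of_dvd _ (dvd_mul_right _ _)]

lemma sumdig (m e : ℕ) : ∀ n, (∑ t ∈ Finset.range n, m / 2 ^ (e + t) % 2 * 2 ^ t) = m / 2 ^ e % 2 ^ n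
  | 0 => by simp [Nat.mod_one]
  | (n + 1) => by
      rw [Finset.sum_range_succ, sumdig m e n, mod_two_pow_add (m / 2 ^ e) n 1]
      have h : m / 2 ^ (e + n) = m / 2 ^ e / 2 ^ n := by
        rw [Nat.div_div_eq_div_mul, ← pow_add]
      rw [h, pow_one]
      ring

lemma sum_Icc_reflect (f : ℕ → ℕ) (a b : ℕ) (h : a ≤ b) :
    ∑ j ∈ Finset.Icc (a + 1) b, f j = ∑ t ∈ Finset.range (b - a), f (b - t) := by
  refine Finset.sum_nbij' (fun j => b - j) (fun t => b - t) ?_ ?_ ?_ ?_ ?_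
  · intro j hj; simp only [Finset.mem_Icc] at hj; simp only [Finset.mem_range]; omega
  · intro t ht; simp only [Finset.mem_range] at ht; simp only [Finset.mem_Icc]; omega
  · intro j hj; simp only [Finset.mem_Icc] at hj; omega
  · intro t ht; simp only [Finset.mem_range] at ht; omega
  · intro j hj; simp only [Finset.mem_Icc] at hj; congr 1; omega


noncomputable def G (m K a b : ℕ) : ℕ :=
  ∑ i ∈ Finset.Ioc a b, m / 2 ^ (K ^ 2 - i ^ 2) % 2 ^ (2 * i - 1) * 2 ^ ((i - 1) ^ 2 + 3 * i)

lemma blk_eq (φ : ℕ → ℝ) (Kp : ℕ → ℕ) (α : ℝ) (p k : ℕ) (hk : k + 1 ≤ Kp p) :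
    Blk φ Kp α (k + 1) p = mfun φ Kp α p / 2 ^ ((Kp p) ^ 2 - (k + 1) ^ 2) % 2 ^ (2 * k + 1) := by
  have hsq : (k + 1) ^ 2 ≤ (Kp p) ^ 2 := Nat.pow_le_pow_left hk 2
  have hexp : (k + 1) ^ 2 = k ^ 2 + (2 * k + 1) := by ring
  rw [Blk, if_pos hk]
  simp only [Nat.add_sub_cancel]
  rw [sum_Icc_reflect _ (k ^ 2) ((k + 1) ^ 2) (by nlinarith)]
  have h2 : (k + 1) ^ 2 - k ^ 2 = 2 * k + 1 := by omega
  rw [h2, ← sumdig (mfun φ Kp α p) ((Kp p) ^ 2 - (k + 1) ^ 2) (2 * k + 1)]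
  refine Finset.sum_congr rfl ?_
  intro t ht
  simp only [Finset.mem_range] at ht
  rw [dig]
  have e1 : (Kp p) ^ 2 - ((k + 1) ^ 2 - t) = (Kp p) ^ 2 - (k + 1) ^ 2 + t := by omega
  have e2 : (k + 1) ^ 2 - ((k + 1) ^ 2 - t) = t := by omega
  rw [e1, e2]

lemma afun_eq (φ : ℕ → ℝ) (Kp : ℕ → ℕ) (α : ℝ) (p : ℕ) :
    afun φ Kp α p = G (mfun φ Kp α p) (Kp p) 0 (Kp p) + tfun Kp p := by
  rw [afun, G]
  congr 1
  have hIcc : Finset.Icc 1 (Kp p) = Finset.Ioc 0 (Kp p) := by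
    ext x; simp [Finset.mem_Icc, Finset.mem_Ioc]; omega
  rw [← hIcc]
  refine Finset.sum_congr rfl ?_
  intro i hi
  simp only [Finset.mem_Icc] at hi
  obtain ⟨k, rfl⟩ : ∃ k, i = k + 1 := ⟨i - 1, by omega⟩
  have h21 : 2 * (k + 1) - 1 = 2 * k + 1 := by omega
  rw [blk_eq φ Kp α p k hi.2, h21]

lemma G_bound (m K : ℕ) : ∀ L, G m K 0 L < 2 ^ (L ^ 2 + 3 * L + 1)
  | 0 => by simp [G]
  | (L + 1) => by
      have h1 : G m K 0 L < 2 ^ (L ^ 2 + 3 * L + 1) := G_bound m K L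
      have hsum : G m K 0 (L + 1) = G m K 0 L +
          m / 2 ^ (K ^ 2 - (L + 1) ^ 2) % 2 ^ (2 * (L + 1) - 1) * 2 ^ (((L + 1) - 1) ^ 2 + 3 * (L + 1)) := by
        rw [G, G, ← Finset.sum_Ioc_consecutive _ (Nat.zero_le L) (Nat.le_succ L),
          Nat.Ioc_succ_singleton, Finset.sum_singleton]
      have e1 : 2 * (L + 1) - 1 = 2 * L + 1 := by omega
      have e2 : ((L + 1) - 1) ^ 2 + 3 * (L + 1) = L ^ 2 + 3 * L + 3 := by
        simp only [Nat.add_sub_cancel]; ring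
      have hterm : m / 2 ^ (K ^ 2 - (L + 1) ^ 2) % 2 ^ (2 * (L + 1) - 1) * 2 ^ (((L + 1) - 1) ^ 2 + 3 * (L + 1))
          < 2 ^ (L ^ 2 + 5 * L + 4) := by
        rw [e1, e2]
        calc m / 2 ^ (K ^ 2 - (L + 1) ^ 2) % 2 ^ (2 * L + 1) * 2 ^ (L ^ 2 + 3 * L + 3)
            < 2 ^ (2 * L + 1) * 2 ^ (L ^ 2 + 3 * L + 3) := by
              exact mul_lt_mul_of_pos_right (Nat.mod_lt _ (pow_pos (by norm_num) _)) (pow_pos (by norm_num) _)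
          _ = 2 ^ (L ^ 2 + 5 * L + 4) := by rw [← pow_add]; congr 1; ring
      have hfin : 2 ^ (L ^ 2 + 3 * L + 1) + 2 ^ (L ^ 2 + 5 * L + 4) ≤ 2 ^ ((L + 1) ^ 2 + 3 * (L + 1) + 1) := by
        have e3 : (L + 1) ^ 2 + 3 * (L + 1) + 1 = (L ^ 2 + 5 * L + 4) + 1 := by ring
        rw [e3, pow_succ]
        have h4 : (2:ℕ) ^ (L ^ 2 + 3 * L + 1) ≤ 2 ^ (L ^ 2 + 5 * L + 4) :=
          Nat.pow_le_pow_right (by norm_num) (by omega)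
        omega
      rw [hsum]
      calc G m K 0 L + _ < 2 ^ (L ^ 2 + 3 * L + 1) + 2 ^ (L ^ 2 + 5 * L + 4) := Nat.add_lt_add h1 hterm
        _ ≤ _ := hfin

lemma G_dvd (m K L : ℕ) : 2 ^ (L ^ 2 + 3 * L + 3) ∣ G m K L K := by
  refine Finset.dvd_sum ?_
  intro i hi
  simp only [Finset.mem_Ioc] at hi
  refine Dvd.dvd.mul_left (pow_dvd_pow 2 ?_) _
  have h1 : L ≤ i - 1 := by omega
  have h2 : L ^ 2 ≤ (i - 1) ^ 2 := Nat.pow_le_pow_left h1 2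
  have h3 : 3 * L + 3 ≤ 3 * i := by omega
  omega

lemma key : ∀ d L K m m', L + d = K →
    G m K L K = G m' K L K → m % 2 ^ (K ^ 2 - L ^ 2) = m' % 2 ^ (K ^ 2 - L ^ 2)
  | 0, L, K, m, m', h, _ => by
      have hKL : K = L := by omega
      subst hKL
      simp [Nat.sub_self, Nat.mod_one]
  | (d + 1), L, K, m, m', h, heq => by
      have hLK : L + 1 ≤ K := by omega
      have peel : ∀ x : ℕ, G x K L K =
          x / 2 ^ (K ^ 2 - (L + 1) ^ 2) % 2 ^ (2 * L + 1) * 2 ^ (L ^ 2 + 3 * L + 3) + G x K (L + 1) K := by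
        intro x
        rw [G, G, ← Finset.sum_Ioc_consecutive _ (Nat.le_succ L) hLK,
          Nat.Ioc_succ_singleton, Finset.sum_singleton]
        have e1 : 2 * (L + 1) - 1 = 2 * L + 1 := by omega
        have e2 : ((L + 1) - 1) ^ 2 + 3 * (L + 1) = L ^ 2 + 3 * L + 3 := by
          simp only [Nat.add_sub_cancel]; ring
        rw [e1, e2]
      rw [peel, peel] at heq
      set A := m / 2 ^ (K ^ 2 - (L + 1) ^ 2) % 2 ^ (2 * L + 1) with hA
      set A' := m' / 2 ^ (K ^ 2 - (L + 1) ^ 2) % 2 ^ (2 * L + 1) with hA'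
      obtain ⟨x, hx⟩ := G_dvd m K (L + 1)
      obtain ⟨y, hy⟩ := G_dvd m' K (L + 1)
      have hbound : ∀ B : ℕ, B < 2 ^ (2 * L + 1) →
          B * 2 ^ (L ^ 2 + 3 * L + 3) < 2 ^ ((L + 1) ^ 2 + 3 * (L + 1) + 3) := by
        intro B hB
        have e3 : (L + 1) ^ 2 + 3 * (L + 1) + 3 = (2 * L + 1) + (L ^ 2 + 3 * L + 3) + 3 := by ring
        calc B * 2 ^ (L ^ 2 + 3 * L + 3) < 2 ^ (2 * L + 1) * 2 ^ (L ^ 2 + 3 * L + 3) :=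
              mul_lt_mul_of_pos_right hB (pow_pos (by norm_num) _)
          _ = 2 ^ ((2 * L + 1) + (L ^ 2 + 3 * L + 3)) := by rw [← pow_add]
          _ ≤ _ := by rw [e3]; exact Nat.pow_le_pow_right (by norm_num) (by omega)
      have hAlt : A < 2 ^ (2 * L + 1) := Nat.mod_lt _ (pow_pos (by norm_num) _)
      have hA'lt : A' < 2 ^ (2 * L + 1) := Nat.mod_lt _ (pow_pos (by norm_num) _)
      have hmods : (A * 2 ^ (L ^ 2 + 3 * L + 3) + 2 ^ ((L + 1) ^ 2 + 3 * (L + 1) + 3) * x)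
            % 2 ^ ((L + 1) ^ 2 + 3 * (L + 1) + 3)
          = (A' * 2 ^ (L ^ 2 + 3 * L + 3) + 2 ^ ((L + 1) ^ 2 + 3 * (L + 1) + 3) * y)
            % 2 ^ ((L + 1) ^ 2 + 3 * (L + 1) + 3) := by
        rw [← hx, ← hy, ← heq]
      rw [Nat.add_mul_mod_self_left, Nat.add_mul_mod_self_left,
        Nat.mod_eq_of_lt (hbound A hAlt), Nat.mod_eq_of_lt (hbound A' hA'lt)] at hmods
      have hAeq : A = A' := Nat.eq_of_mul_eq_mul_right (pow_pos (by norm_num) _) hmods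
      have htails : G m K (L + 1) K = G m' K (L + 1) K := by
        rw [hAeq] at heq
        exact Nat.add_left_cancel heq
      have ih := key d (L + 1) K m m' (by omega) htails
      have hsub : (L + 1) ^ 2 ≤ K ^ 2 := Nat.pow_le_pow_left hLK 2
      have hsq : (L + 1) ^ 2 = L ^ 2 + (2 * L + 1) := by ring
      have hcl : L ^ 2 ≤ (L + 1) ^ 2 := by rw [hsq]; exact Nat.le_add_right _ _
      have e1 : (L + 1) ^ 2 - L ^ 2 = 2 * L + 1 := by rw [hsq]; exact Nat.add_sub_cancel_left _ _
      have hexp : K ^ 2 - L ^ 2 = (K ^ 2 - (L + 1) ^ 2) + (2 * L + 1) := by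
        rw [← e1, Nat.sub_add_sub_cancel hsub hcl]
      calc m % 2 ^ (K ^ 2 - L ^ 2)
          = 2 ^ (K ^ 2 - (L + 1) ^ 2) * A + m % 2 ^ (K ^ 2 - (L + 1) ^ 2) := by
            rw [hexp, mod_two_pow_add, hA]
        _ = 2 ^ (K ^ 2 - (L + 1) ^ 2) * A' + m' % 2 ^ (K ^ 2 - (L + 1) ^ 2) := by
            rw [hAeq, ih]
        _ = m' % 2 ^ (K ^ 2 - L ^ 2) := by rw [hexp, mod_two_pow_add, hA']

lemma afun_congr (φ : ℕ → ℝ) (Kp : ℕ → ℕ) (α : ℝ) {p r : ℕ} (hK : Kp p = Kp r)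
    (hm : mfun φ Kp α p = mfun φ Kp α r) : afun φ Kp α p = afun φ Kp α r := by
  unfold afun Blk dig tfun
  simp only [hK, hm]

lemma bad_mod (φ : ℕ → ℝ) (Kp : ℕ → ℕ) (α' : ℝ) (p q r s K L : ℕ)
    (hp : Kp p = K) (hr : Kp r = K) (hq : Kp q = L) (hs : Kp s = L) (hLK : L < K)
    (hbad : IsBad φ Kp α' p q r s) :
    mfun φ Kp α' p % 2 ^ (K ^ 2 - L ^ 2) = mfun φ Kp α' r % 2 ^ (K ^ 2 - L ^ 2) ∧
      mfun φ Kp α' p ≠ mfun φ Kp α' r := by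
  obtain ⟨heq, hpr, hsr, hqs⟩ := hbad
  constructor
  swap
  · intro hcon
    exact absurd (afun_congr φ Kp α' (hp.trans hr.symm) hcon) (by omega)
  · set mp := mfun φ Kp α' p
    set mr := mfun φ Kp α' r
    set mq := mfun φ Kp α' q
    set ms := mfun φ Kp α' s
    rw [afun_eq φ Kp α' p, afun_eq φ Kp α' q, afun_eq φ Kp α' r, afun_eq φ Kp α' s,
      hp, hr, hq, hs] at heq
    have htp : tfun Kp p = 2 ^ (K ^ 2 + 3 * K + 2) := by rw [tfun, hp]
    have htr : tfun Kp r = 2 ^ (K ^ 2 + 3 * K + 2) := by rw [tfun, hr]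
    have htq : tfun Kp q = 2 ^ (L ^ 2 + 3 * L + 2) := by rw [tfun, hq]
    have hts : tfun Kp s = 2 ^ (L ^ 2 + 3 * L + 2) := by rw [tfun, hs]
    rw [htp, htr, htq, hts] at heq
    have gsplit : ∀ x : ℕ, G x K 0 K = G x K 0 L + G x K L K := by
      intro x
      rw [G, G, G]
      exact (Finset.sum_Ioc_consecutive _ (Nat.zero_le L) hLK.le).symm
    rw [gsplit mp, gsplit mr] at heq
    obtain ⟨x, hx⟩ := G_dvd mp K L
    obtain ⟨y, hy⟩ := G_dvd mr K L
    rw [hx, hy] at heq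
    have b1 : G mp K 0 L < 2 ^ (L ^ 2 + 3 * L + 1) := G_bound mp K L
    have b2 : G mr K 0 L < 2 ^ (L ^ 2 + 3 * L + 1) := G_bound mr K L
    have b3 : G mq L 0 L < 2 ^ (L ^ 2 + 3 * L + 1) := G_bound mq L L
    have b4 : G ms L 0 L < 2 ^ (L ^ 2 + 3 * L + 1) := G_bound ms L L
    have hz := congrArg (fun n : ℕ => (n : ℤ)) heq
    push_cast at hz
    have hc3 : (2 : ℤ) ^ (L ^ 2 + 3 * L + 3) = 2 ^ (L ^ 2 + 3 * L + 1) * 4 := by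
      rw [show L ^ 2 + 3 * L + 3 = (L ^ 2 + 3 * L + 1) + 2 by ring, pow_add]
      norm_num
    have b1' : (G mp K 0 L : ℤ) < 2 ^ (L ^ 2 + 3 * L + 1) := by exact_mod_cast b1
    have b2' : (G mr K 0 L : ℤ) < 2 ^ (L ^ 2 + 3 * L + 1) := by exact_mod_cast b2
    have b3' : (G mq L 0 L : ℤ) < 2 ^ (L ^ 2 + 3 * L + 1) := by exact_mod_cast b3
    have b4' : (G ms L 0 L : ℤ) < 2 ^ (L ^ 2 + 3 * L + 1) := by exact_mod_cast b4
    have n1 : (0 : ℤ) ≤ (G mp K 0 L : ℤ) := Int.natCast_nonneg _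
    have n2 : (0 : ℤ) ≤ (G mr K 0 L : ℤ) := Int.natCast_nonneg _
    have n3 : (0 : ℤ) ≤ (G mq L 0 L : ℤ) := Int.natCast_nonneg _
    have n4 : (0 : ℤ) ≤ (G ms L 0 L : ℤ) := Int.natCast_nonneg _
    have hR : (2 : ℤ) ^ (L ^ 2 + 3 * L + 1) * 4 * ((x : ℤ) - (y : ℤ))
        = ((G mr K 0 L : ℤ) + (G ms L 0 L : ℤ)) - ((G mp K 0 L : ℤ) + (G mq L 0 L : ℤ)) := by
      rw [← hc3]; linarith [hz]
    have habs : |(2 : ℤ) ^ (L ^ 2 + 3 * L + 1) * 4 * ((x : ℤ) - (y : ℤ))|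
        < 2 ^ (L ^ 2 + 3 * L + 1) * 4 := by
      rw [hR, abs_lt]
      constructor <;> linarith
    have h0 : (2 : ℤ) ^ (L ^ 2 + 3 * L + 1) * 4 * ((x : ℤ) - (y : ℤ)) = 0 :=
      Int.eq_zero_of_abs_lt_dvd (dvd_mul_right _ _) habs
    have hxy : (x : ℤ) = (y : ℤ) := by
      rcases mul_eq_zero.mp h0 with h | h
      · exfalso; have : (0:ℤ) < 2 ^ (L ^ 2 + 3 * L + 1) * 4 := by positivity
        omega
      · linarith
    have hxy' : x = y := by exact_mod_cast hxy
    have hGG : G mp K L K = G mr K L K := by rw [hx, hy, hxy']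
    exact key (K - L) L K mp mr (by omega) hGG

open MeasureTheory in
lemma meas (X Y : ℝ) (M : ℕ) (hM : 2 ≤ M) (h0 : 0 ≤ Y) (hXY : Y < X)
    (hD : (M : ℝ) / 4 ≤ X - Y) :
    volume {α : ℝ | α ∈ Set.Ico (1 : ℝ) 2 ∧ ⌊X * α⌋₊ ≡ ⌊Y * α⌋₊ [MOD M]} ≤
      ENNReal.ofReal (16 / M) := by
  have hDpos : (0 : ℝ) < X - Y := sub_pos.mpr hXY
  have hMpos : (0 : ℝ) < M := by
    have : (2 : ℝ) ≤ M := by exact_mod_cast hM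
    linarith
  set D := X - Y with hDdef
  set N : ℕ := ⌊(2 * D + 1) / M⌋₊ + 1 with hN
  have hsub : {α : ℝ | α ∈ Set.Ico (1 : ℝ) 2 ∧ ⌊X * α⌋₊ ≡ ⌊Y * α⌋₊ [MOD M]} ⊆
      ⋃ k ∈ Finset.range N, Set.Ioo (((M : ℝ) * k - 1) / D) (((M : ℝ) * k + 1) / D) := by
    rintro α ⟨⟨hα1, hα2⟩, hmod⟩
    have hαpos : (0 : ℝ) < α := by linarith
    have hX : (0 : ℝ) < X := lt_of_le_of_lt h0 hXY
    have hYX : Y * α ≤ X * α := by nlinarith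
    have hble : ⌊Y * α⌋₊ ≤ ⌊X * α⌋₊ := Nat.floor_le_floor hYX
    obtain ⟨k, hk⟩ := (Nat.modEq_iff_dvd' hble).mp hmod.symm
    have hfl : (⌊X * α⌋₊ : ℝ) = (⌊Y * α⌋₊ : ℝ) + (M : ℝ) * k := by
      have : ⌊X * α⌋₊ = ⌊Y * α⌋₊ + M * k := by omega
      rw [this]; push_cast; ring
    have f1 : (⌊X * α⌋₊ : ℝ) ≤ X * α := Nat.floor_le (by positivity)
    have f2 : X * α < ⌊X * α⌋₊ + 1 := Nat.lt_floor_add_one _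
    have f3 : (⌊Y * α⌋₊ : ℝ) ≤ Y * α := Nat.floor_le (by positivity)
    have f4 : Y * α < ⌊Y * α⌋₊ + 1 := Nat.lt_floor_add_one _
    have hDα : D * α = X * α - Y * α := by rw [hDdef]; ring
    have key1 : (M : ℝ) * k - 1 < D * α ∧ D * α < (M : ℝ) * k + 1 := by
      constructor <;> [nlinarith [hfl, f1, f2, f3, f4, hDα]; nlinarith [hfl, f1, f2, f3, f4, hDα]]
    have hkN : k ∈ Finset.range N := by
      rw [Finset.mem_range, hN]
      refine Nat.lt_succ_of_le (Nat.le_floor ?_)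
      rw [le_div_iff₀ hMpos]
      nlinarith [key1.2]
    refine Set.mem_biUnion hkN ?_
    rw [Set.mem_Ioo]
    constructor
    · rw [div_lt_iff₀ hDpos]
      nlinarith [key1.1]
    · rw [lt_div_iff₀ hDpos]
      nlinarith [key1.2]
  calc volume {α : ℝ | α ∈ Set.Ico (1 : ℝ) 2 ∧ ⌊X * α⌋₊ ≡ ⌊Y * α⌋₊ [MOD M]}
      ≤ volume (⋃ k ∈ Finset.range N, Set.Ioo (((M : ℝ) * k - 1) / D) (((M : ℝ) * k + 1) / D)) :=
        measure_mono hsub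
    _ ≤ ∑ k ∈ Finset.range N, volume (Set.Ioo (((M : ℝ) * k - 1) / D) (((M : ℝ) * k + 1) / D)) :=
        measure_biUnion_finset_le _ _
    _ = ∑ _k ∈ Finset.range N, ENNReal.ofReal (2 / D) := by
        refine Finset.sum_congr rfl ?_
        intro k _
        rw [Real.volume_Ioo]
        congr 1
        rw [div_sub_div_same]
        congr 1
        ring
    _ = (N : ENNReal) * ENNReal.ofReal (2 / D) := by
        rw [Finset.sum_const, Finset.card_range, nsmul_eq_mul]
    _ = ENNReal.ofReal ((N : ℝ) * (2 / D)) := by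
        rw [← ENNReal.ofReal_natCast N, ← ENNReal.ofReal_mul (by positivity)]
    _ ≤ ENNReal.ofReal (16 / M) := by
        refine ENNReal.ofReal_le_ofReal ?_
        have hNle : (N : ℝ) ≤ (2 * D + 1) / M + 1 := by
          rw [hN]
          push_cast
          have := Nat.floor_le (show (0:ℝ) ≤ (2 * D + 1) / M by positivity)
          linarith
        have hNM : (N : ℝ) * M ≤ 2 * D + 1 + M := by
          have h := mul_le_mul_of_nonneg_right hNle hMpos.le
          calc (N : ℝ) * M ≤ ((2 * D + 1) / M + 1) * M := h
            _ = 2 * D + 1 + M := by field_simp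
        have hrw : (N : ℝ) * (2 / D) = ((N : ℝ) * 2) / D := by ring
        rw [hrw, div_le_div_iff₀ hDpos hMpos]
        have hM' : (2 : ℝ) ≤ M := by exact_mod_cast hM
        nlinarith [hNM, hD, hM', mul_le_mul_of_nonneg_left hNM (by norm_num : (0:ℝ) ≤ 2)]

open MeasureTheory in
theorem stmt12 (β : ℝ) (hβ : 2 < β)
    (u v Kp : ℕ → ℕ) (φ : ℕ → ℝ) (hφ : PhiHyp u v φ) (hKp : KpHyp β Kp) :
    ∃ C : ℝ, 0 < C ∧ ∃ L₀ : ℕ, ∀ K L : ℕ, L₀ ≤ L → L < K →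
      ∀ p r : ℕ,
        p.Prime → p % 4 = 1 → Kp p = K →
        r.Prime → r % 4 = 1 → Kp r = K → p ≠ r →
        (∃ (q s : ℕ) (α' : ℝ), α' ∈ Set.Ico (1 : ℝ) 2 ∧
          q.Prime ∧ q % 4 = 1 ∧ Kp q = L ∧
          s.Prime ∧ s % 4 = 1 ∧ Kp s = L ∧
          IsBad φ Kp α' p q r s) →
        MeasureTheory.volume
            {α : ℝ | α ∈ Set.Ico (1 : ℝ) 2 ∧
              ⌊(2 : ℝ) ^ (K ^ 2) * α * φ p⌋₊ ≡ ⌊(2 : ℝ) ^ (K ^ 2) * α * φ r⌋₊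
                [MOD 2 ^ (K ^ 2 - L ^ 2)]} ≤
          ENNReal.ofReal (C * (2 : ℝ) ^ ((L : ℝ) ^ 2 - (K : ℝ) ^ 2)) := by
  refine ⟨16, by norm_num, 1, ?_⟩
  intro K L hL0 hLK p r hp1 hp4 hpK hr1 hr4 hrK hpr hex
  obtain ⟨q, s, α', hα', hq1, hq4, hqL, hs1, hs4, hsL, hbad⟩ := hex
  obtain ⟨hα'1, hα'2⟩ := hα'
  obtain ⟨hmod', hne⟩ := bad_mod φ Kp α' p q r s K L hpK hrK hqL hsL hLK hbad
  -- positivity of φ p, φ r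
  have hπ := Real.pi_pos
  obtain ⟨hv, hvu, -, hφp⟩ := hφ p hp1 hp4
  obtain ⟨hv', hvu', -, hφr⟩ := hφ r hr1 hr4
  have hφp_pos : 0 < φ p := by
    rw [hφp]
    have h1 : (0 : ℝ) < (v p : ℝ) / (u p : ℝ) := by
      apply div_pos (by exact_mod_cast hv) (by exact_mod_cast (lt_trans hv hvu))
    have h2 : Real.arctan 0 < Real.arctan ((v p : ℝ) / (u p : ℝ)) := Real.arctan_strictMono h1
    rw [Real.arctan_zero] at h2
    positivity
  have hφr_pos : 0 < φ r := by
    rw [hφr]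
    have h1 : (0 : ℝ) < (v r : ℝ) / (u r : ℝ) := by
      apply div_pos (by exact_mod_cast hv') (by exact_mod_cast (lt_trans hv' hvu'))
    have h2 : Real.arctan 0 < Real.arctan ((v r : ℝ) / (u r : ℝ)) := Real.arctan_strictMono h1
    rw [Real.arctan_zero] at h2
    positivity
  -- the modulus
  set M : ℕ := 2 ^ (K ^ 2 - L ^ 2) with hMdef
  have hL2K2 : L ^ 2 < K ^ 2 := Nat.pow_lt_pow_left hLK (by norm_num)
  have hM2 : 2 ≤ M := by
    rw [hMdef]
    calc (2:ℕ) = 2 ^ 1 := by norm_num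
      _ ≤ 2 ^ (K ^ 2 - L ^ 2) := Nat.pow_le_pow_right (by norm_num) (by omega)
  have hMR : (0 : ℝ) < (M : ℝ) := by
    have : (2 : ℝ) ≤ (M : ℝ) := by exact_mod_cast hM2
    linarith
  -- the two scaled phases
  set Xp : ℝ := (2 : ℝ) ^ (K ^ 2) * φ p with hXp
  set Xr : ℝ := (2 : ℝ) ^ (K ^ 2) * φ r with hXr
  have hXp0 : 0 < Xp := by rw [hXp]; positivity
  have hXr0 : 0 < Xr := by rw [hXr]; positivity
  have hmp : mfun φ Kp α' p = ⌊Xp * α'⌋₊ := by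
    rw [mfun, hpK, hXp]
    congr 1
    ring
  have hmr : mfun φ Kp α' r = ⌊Xr * α'⌋₊ := by
    rw [mfun, hrK, hXr]
    congr 1
    ring
  -- the gap between Xp and Xr
  have hMle : (M : ℝ) ≤ |(mfun φ Kp α' p : ℝ) - (mfun φ Kp α' r : ℝ)| := by
    have hdvd : (M : ℤ) ∣ (mfun φ Kp α' r : ℤ) - (mfun φ Kp α' p : ℤ) :=
      Nat.ModEq.dvd (show Nat.ModEq M (mfun φ Kp α' p) (mfun φ Kp α' r) from hmod')
    have hne' : ((mfun φ Kp α' r : ℤ) - (mfun φ Kp α' p : ℤ)) ≠ 0 := by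
      intro hcon
      apply hne
      have : (mfun φ Kp α' r : ℤ) = (mfun φ Kp α' p : ℤ) := by linarith [sub_eq_zero.mp hcon]
      exact_mod_cast this.symm
    have h1 : (M : ℤ) ≤ |(mfun φ Kp α' r : ℤ) - (mfun φ Kp α' p : ℤ)| :=
      Int.le_of_dvd (abs_pos.mpr hne') ((dvd_abs _ _).mpr hdvd)
    have h2 : (M : ℝ) ≤ |(mfun φ Kp α' r : ℝ) - (mfun φ Kp α' p : ℝ)| := by
      exact_mod_cast h1
    rw [abs_sub_comm] at h2
    exact h2
  have habs : |(mfun φ Kp α' p : ℝ) - (mfun φ Kp α' r : ℝ)| < |Xp - Xr| * α' + 1 := by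
    rw [hmp, hmr]
    have f1 : (⌊Xp * α'⌋₊ : ℝ) ≤ Xp * α' := Nat.floor_le (by positivity)
    have f2 : Xp * α' < ⌊Xp * α'⌋₊ + 1 := Nat.lt_floor_add_one _
    have f3 : (⌊Xr * α'⌋₊ : ℝ) ≤ Xr * α' := Nat.floor_le (by positivity)
    have f4 : Xr * α' < ⌊Xr * α'⌋₊ + 1 := Nat.lt_floor_add_one _
    have hsm : |Xp - Xr| * α' = |Xp * α' - Xr * α'| := by
      rw [← sub_mul, abs_mul, abs_of_pos (by linarith : (0:ℝ) < α')]
    rw [hsm, abs_sub_lt_iff]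
    constructor
    · have := le_abs_self (Xp * α' - Xr * α')
      linarith
    · have := neg_abs_le (Xp * α' - Xr * α')
      linarith
  have hgap : (M : ℝ) / 4 ≤ |Xp - Xr| := by
    have h1 : (M : ℝ) < |Xp - Xr| * α' + 1 := lt_of_le_of_lt hMle habs
    have h2 : |Xp - Xr| * α' ≤ |Xp - Xr| * 2 := by
      apply mul_le_mul_of_nonneg_left (by linarith) (abs_nonneg _)
    have hM2' : (2 : ℝ) ≤ (M : ℝ) := by exact_mod_cast hM2
    linarith
  have hgap0 : Xp ≠ Xr := by
    intro hcon
    rw [hcon, sub_self, abs_zero] at hgap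
    linarith
  -- identify the target set, in the two symmetric cases
  have hC : (16 : ℝ) / M = 16 * (2 : ℝ) ^ ((L : ℝ) ^ 2 - (K : ℝ) ^ 2) := by
    have h1 : ((L : ℝ) ^ 2 - (K : ℝ) ^ 2) = -(((K ^ 2 - L ^ 2 : ℕ) : ℝ)) := by
      rw [Nat.cast_sub hL2K2.le]
      push_cast
      ring
    rw [h1, Real.rpow_neg (by norm_num), Real.rpow_natCast]
    rw [div_eq_mul_inv]
    congr 2
    rw [hMdef]
    push_cast
    ring
  rcases lt_or_gt_of_ne hgap0 with hlt | hgt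
  · -- Xp < Xr
    have hset : {α : ℝ | α ∈ Set.Ico (1 : ℝ) 2 ∧
        ⌊(2 : ℝ) ^ (K ^ 2) * α * φ p⌋₊ ≡ ⌊(2 : ℝ) ^ (K ^ 2) * α * φ r⌋₊ [MOD 2 ^ (K ^ 2 - L ^ 2)]}
        = {α : ℝ | α ∈ Set.Ico (1 : ℝ) 2 ∧ ⌊Xr * α⌋₊ ≡ ⌊Xp * α⌋₊ [MOD M]} := by
      ext a
      simp only [Set.mem_setOf_eq, ← hMdef]
      rw [show (2 : ℝ) ^ (K ^ 2) * a * φ p = Xp * a by rw [hXp]; ring,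
        show (2 : ℝ) ^ (K ^ 2) * a * φ r = Xr * a by rw [hXr]; ring]
      exact and_congr_right fun _ => ⟨Nat.ModEq.symm, Nat.ModEq.symm⟩
    rw [hset]
    have hD4 : (M : ℝ) / 4 ≤ Xr - Xp := by
      rwa [abs_of_neg (by linarith), neg_sub] at hgap
    calc volume {α : ℝ | α ∈ Set.Ico (1 : ℝ) 2 ∧ ⌊Xr * α⌋₊ ≡ ⌊Xp * α⌋₊ [MOD M]}
        ≤ ENNReal.ofReal (16 / M) := meas Xr Xp M hM2 hXp0.le hlt hD4
      _ = ENNReal.ofReal (16 * (2 : ℝ) ^ ((L : ℝ) ^ 2 - (K : ℝ) ^ 2)) := by rw [hC]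
  · -- Xr < Xp
    have hset : {α : ℝ | α ∈ Set.Ico (1 : ℝ) 2 ∧
        ⌊(2 : ℝ) ^ (K ^ 2) * α * φ p⌋₊ ≡ ⌊(2 : ℝ) ^ (K ^ 2) * α * φ r⌋₊ [MOD 2 ^ (K ^ 2 - L ^ 2)]}
        = {α : ℝ | α ∈ Set.Ico (1 : ℝ) 2 ∧ ⌊Xp * α⌋₊ ≡ ⌊Xr * α⌋₊ [MOD M]} := by
      ext a
      simp only [Set.mem_setOf_eq, ← hMdef]
      rw [show (2 : ℝ) ^ (K ^ 2) * a * φ p = Xp * a by rw [hXp]; ring,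
        show (2 : ℝ) ^ (K ^ 2) * a * φ r = Xr * a by rw [hXr]; ring]
    rw [hset]
    have hD4 : (M : ℝ) / 4 ≤ Xp - Xr := by
      rwa [abs_of_pos (by linarith : (0:ℝ) < Xp - Xr)] at hgap
    calc volume {α : ℝ | α ∈ Set.Ico (1 : ℝ) 2 ∧ ⌊Xp * α⌋₊ ≡ ⌊Xr * α⌋₊ [MOD M]}
        ≤ ENNReal.ofReal (16 / M) := meas Xp Xr M hM2 hXr0.le hgt hD4
      _ = ENNReal.ofReal (16 * (2 : ℝ) ^ ((L : ℝ) ^ 2 - (K : ℝ) ^ 2)) := by rw [hC]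
end

section
/- For every prime p ≡ 1 (mod 4) (with β·log₂ p not a perfect square) and every α ∈ [1,2), one has 2^{K_p² + 3K_p + 2} ≤ a_p < 2^{K_p² + 3K_p + 3}; consequently, for every ε > 0 there is p₀ such that p^{β−ε} < a_p < p^{β+ε} for all such primes p ≥ p₀. -/
lemma sum_range_two_pow (n : ℕ) : ∑ k ∈ Finset.range n, 2 ^ k = 2 ^ n - 1 := by
  induction n with
  | zero => simp
  | succ n ih =>
    rw [Finset.sum_range_succ, ih]
    have h1 : (1:ℕ) ≤ 2 ^ n := Nat.one_le_two_pow
    have h2 : (2:ℕ) ^ (n + 1) = 2 * 2 ^ n := by ring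
    omega

lemma sum_Icc_pow_le (a b : ℕ) :
    ∑ j ∈ Finset.Icc (a + 1) b, 2 ^ (b - j) ≤ 2 ^ (b - a) - 1 := by
  rcases le_or_gt b a with h | h
  · rw [Finset.Icc_eq_empty (by omega)]; simp
  · have he : ∑ j ∈ Finset.Icc (a + 1) b, 2 ^ (b - j)
        = ∑ k ∈ Finset.range (b - a), 2 ^ k := by
      refine Finset.sum_nbij' (fun j => b - j) (fun k => b - k) ?_ ?_ ?_ ?_ ?_
      all_goals intro x hx
      all_goals simp only [Finset.mem_Icc, Finset.mem_range] at *
      all_goals omega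
    rw [he, sum_range_two_pow]

lemma Blk_le (φ : ℕ → ℝ) (Kp : ℕ → ℕ) (α : ℝ) (i p : ℕ) (hi : 1 ≤ i) :
    Blk φ Kp α i p ≤ 2 ^ (2 * i - 1) - 1 := by
  unfold Blk
  split
  · obtain ⟨m, rfl⟩ : ∃ m, i = m + 1 := ⟨i - 1, by omega⟩
    calc ∑ j ∈ Finset.Icc ((m + 1 - 1) ^ 2 + 1) ((m + 1) ^ 2),
            dig φ Kp α j p * 2 ^ ((m + 1) ^ 2 - j)
        ≤ ∑ j ∈ Finset.Icc (m ^ 2 + 1) ((m + 1) ^ 2), 2 ^ ((m + 1) ^ 2 - j) := by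
          simp only [Nat.add_sub_cancel]
          refine Finset.sum_le_sum fun j _ => ?_
          have hd : dig φ Kp α j p ≤ 1 := by unfold dig; omega
          calc dig φ Kp α j p * 2 ^ ((m + 1) ^ 2 - j)
              ≤ 1 * 2 ^ ((m + 1) ^ 2 - j) := Nat.mul_le_mul_right _ hd
            _ = 2 ^ ((m + 1) ^ 2 - j) := one_mul _
      _ ≤ 2 ^ ((m + 1) ^ 2 - m ^ 2) - 1 := sum_Icc_pow_le _ _
      _ = 2 ^ (2 * (m + 1) - 1) - 1 := by
          have h1 : (m + 1) ^ 2 = m ^ 2 + (2 * m + 1) := by ring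
          have e1 : (m + 1) ^ 2 - m ^ 2 = 2 * m + 1 := by omega
          have e2 : 2 * (m + 1) - 1 = 2 * m + 1 := by omega
          rw [e1, e2]
  · exact Nat.zero_le _

lemma sum_blk_lt (φ : ℕ → ℝ) (Kp : ℕ → ℕ) (α : ℝ) (p : ℕ) (n : ℕ) :
    ∑ i ∈ Finset.Icc 1 n, Blk φ Kp α i p * 2 ^ ((i - 1) ^ 2 + 3 * i)
      < 2 ^ (n ^ 2 + 3 * n) := by
  induction n with
  | zero => simp
  | succ n ih =>
    rw [Finset.sum_Icc_succ_top (by omega)]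
    simp only [Nat.add_sub_cancel]
    set A : ℕ := 2 ^ (n ^ 2 + 3 * n) with hA
    set B : ℕ := 2 ^ (2 * n + 1) with hBdef
    have hB : Blk φ Kp α (n + 1) p + 1 ≤ B := by
      have h := Blk_le φ Kp α (n + 1) p (by omega)
      have e : 2 * (n + 1) - 1 = 2 * n + 1 := by omega
      rw [e] at h
      have : (1:ℕ) ≤ B := Nat.one_le_two_pow
      omega
    have h1 : (2:ℕ) ^ (n ^ 2 + 3 * (n + 1)) = A * 8 := by
      rw [show n ^ 2 + 3 * (n + 1) = (n ^ 2 + 3 * n) + 3 by ring, pow_add, hA]; norm_num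
    have h2 : (2:ℕ) ^ ((n + 1) ^ 2 + 3 * (n + 1)) = A * B * 8 := by
      rw [show (n + 1) ^ 2 + 3 * (n + 1) = (n ^ 2 + 3 * n) + (2 * n + 1) + 3 by ring,
        pow_add, pow_add, hA, hBdef]; norm_num
    rw [h1, h2]
    calc (∑ i ∈ Finset.Icc 1 n, Blk φ Kp α i p * 2 ^ ((i - 1) ^ 2 + 3 * i))
            + Blk φ Kp α (n + 1) p * (A * 8)
        < A + Blk φ Kp α (n + 1) p * (A * 8) := Nat.add_lt_add_right ih _
      _ ≤ A * 8 + Blk φ Kp α (n + 1) p * (A * 8) :=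
          Nat.add_le_add_right (Nat.le_mul_of_pos_right _ (by norm_num)) _
      _ = (Blk φ Kp α (n + 1) p + 1) * (A * 8) := by ring
      _ ≤ B * (A * 8) := Nat.mul_le_mul_right _ hB
      _ = A * B * 8 := by ring

lemma afun_bounds (φ : ℕ → ℝ) (Kp : ℕ → ℕ) (α : ℝ) (p : ℕ) :
    2 ^ ((Kp p) ^ 2 + 3 * Kp p + 2) ≤ afun φ Kp α p ∧
      afun φ Kp α p < 2 ^ ((Kp p) ^ 2 + 3 * Kp p + 3) := by
  constructor
  · exact Nat.le_add_left _ _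
  · unfold afun tfun
    have h := sum_blk_lt φ Kp α p (Kp p)
    set A : ℕ := 2 ^ ((Kp p) ^ 2 + 3 * Kp p) with hA
    have h2 : (2:ℕ) ^ ((Kp p) ^ 2 + 3 * Kp p + 2) = A * 4 := by rw [pow_add, hA]; norm_num
    have h3 : (2:ℕ) ^ ((Kp p) ^ 2 + 3 * Kp p + 3) = A * 8 := by rw [pow_add, hA]; norm_num
    rw [h2, h3]
    omega


theorem stmt16 (β : ℝ) (hβ : 2 < β)
    (u v Kp : ℕ → ℕ) (φ : ℕ → ℝ) (hφ : PhiHyp u v φ) (hKp : KpHyp β Kp) :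
    (∀ p : ℕ, p.Prime → p % 4 = 1 → ∀ α : ℝ, α ∈ Set.Ico (1 : ℝ) 2 →
      2 ^ ((Kp p) ^ 2 + 3 * Kp p + 2) ≤ afun φ Kp α p ∧
      afun φ Kp α p < 2 ^ ((Kp p) ^ 2 + 3 * Kp p + 3)) ∧
    (∀ ε : ℝ, 0 < ε → ∃ p₀ : ℕ, ∀ p : ℕ, p₀ ≤ p → p.Prime → p % 4 = 1 →
      ∀ α : ℝ, α ∈ Set.Ico (1 : ℝ) 2 →
        (p : ℝ) ^ (β - ε) < (afun φ Kp α p : ℝ) ∧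
        (afun φ Kp α p : ℝ) < (p : ℝ) ^ (β + ε)) := by
  refine ⟨fun p _ _ α _ => afun_bounds φ Kp α p, fun ε hε => ?_⟩
  refine ⟨⌈(2:ℝ) ^ (max 1 (((7 * Real.sqrt β + 14) / ε) ^ 2))⌉₊,
    fun p hp hprime hmod α hα => ?_⟩
  set T : ℝ := max 1 (((7 * Real.sqrt β + 14) / ε) ^ 2) with hTdef
  obtain ⟨hK2, hlow, hhigh⟩ := hKp p hprime hmod
  obtain ⟨hle, hlt⟩ := afun_bounds φ Kp α p
  obtain ⟨k, hk⟩ : ∃ k, Kp p = k + 3 := ⟨Kp p - 3, by omega⟩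
  rw [hk] at hlow hhigh hle hlt
  rw [show k + 3 - 2 = k + 1 from by omega] at hlow
  rw [show k + 3 - 1 = k + 2 from by omega] at hhigh
  have hp2 : 2 ≤ p := hprime.two_le
  have hp0 : (0:ℝ) < p := by exact_mod_cast (by omega : 0 < p)
  have hp1 : (1:ℝ) < p := by exact_mod_cast (by omega : 1 < p)
  set x := Real.logb 2 p with hxdef
  have hTx : T ≤ x := by
    have h2T : (2:ℝ) ^ T ≤ p := le_trans (Nat.le_ceil _) (by exact_mod_cast hp)
    calc T = Real.logb 2 ((2:ℝ) ^ T) :=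
          (Real.logb_rpow (by norm_num) (by norm_num)).symm
      _ ≤ x := Real.logb_le_logb_of_le (by norm_num) (by positivity) h2T
  have hx1 : (1:ℝ) ≤ x := le_trans (le_max_left _ _) hTx
  have hx0 : (0:ℝ) ≤ x := by linarith
  have hβx : ((k:ℝ) + 1) ^ 2 < β * x := by
    have h := Real.logb_lt_logb (b := 2) (by norm_num) (by positivity) hlow
    rw [← Real.rpow_natCast 2 ((k + 1) ^ 2), Real.logb_rpow (by norm_num) (by norm_num),
      Real.logb_rpow_eq_mul_logb_of_pos hp0] at h
    push_cast at h
    linarith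
  have hk1 : ((k:ℝ) + 1) ≤ Real.sqrt (β * x) :=
    Real.le_sqrt_of_sq_le (le_of_lt hβx)
  have hq : (7 * Real.sqrt β + 14) / ε ≤ Real.sqrt x :=
    Real.le_sqrt_of_sq_le (le_trans (le_max_right _ _) hTx)
  have hsx : Real.sqrt x * Real.sqrt x = x := Real.mul_self_sqrt hx0
  have hsx1 : (1:ℝ) ≤ Real.sqrt x := by
    have h := Real.sqrt_le_sqrt hx1
    simpa using h
  have hmulsqrt : Real.sqrt β * Real.sqrt x = Real.sqrt (β * x) :=
    (Real.sqrt_mul (by linarith) x).symm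
  have key : 7 * (k:ℝ) + 20 ≤ ε * x := by
    have h1 : 7 * Real.sqrt β + 14 ≤ ε * Real.sqrt x := by
      rw [div_le_iff₀ hε] at hq
      linarith
    have h2 : (7 * Real.sqrt β + 14) * Real.sqrt x ≤ ε * Real.sqrt x * Real.sqrt x :=
      mul_le_mul_of_nonneg_right h1 (Real.sqrt_nonneg _)
    have h3 : (7 * Real.sqrt β + 14) * Real.sqrt x
        = 7 * Real.sqrt (β * x) + 14 * Real.sqrt x := by
      rw [← hmulsqrt]; ring
    have h4 : ε * Real.sqrt x * Real.sqrt x = ε * x := by rw [mul_assoc, hsx]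
    linarith
  constructor
  · have s1 : (p:ℝ) ^ (β - ε) < (p:ℝ) ^ β :=
      Real.rpow_lt_rpow_of_exponent_lt hp1 (by linarith)
    have s3 : (2:ℝ) ^ ((k + 2) ^ 2) ≤ (2:ℝ) ^ ((k + 3) ^ 2 + 3 * (k + 3) + 2) := by
      apply pow_le_pow_right₀ (by norm_num)
      nlinarith
    have s4 : ((2:ℕ) ^ ((k + 3) ^ 2 + 3 * (k + 3) + 2) : ℝ) ≤ (afun φ Kp α p : ℝ) := by
      exact_mod_cast hle
    push_cast at s4
    linarith
  · have u1 : ((afun φ Kp α p : ℕ) : ℝ) < (2:ℝ) ^ ((k + 3) ^ 2 + 3 * (k + 3) + 3) := by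
      exact_mod_cast hlt
    have e : (k + 3) ^ 2 + 3 * (k + 3) + 3 = (k + 1) ^ 2 + (7 * k + 20) := by ring
    rw [e, pow_add] at u1
    have u2 : (2:ℝ) ^ ((k + 1) ^ 2) * (2:ℝ) ^ (7 * k + 20)
        < (p:ℝ) ^ β * (2:ℝ) ^ (7 * k + 20) :=
      mul_lt_mul_of_pos_right hlow (by positivity)
    have u3 : (2:ℝ) ^ (7 * k + 20) ≤ (p:ℝ) ^ ε := by
      have hp' : (p:ℝ) = (2:ℝ) ^ x := (Real.rpow_logb (by norm_num) (by norm_num) hp0).symm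
      rw [hp', ← Real.rpow_natCast 2 (7 * k + 20), ← Real.rpow_mul (by norm_num)]
      apply Real.rpow_le_rpow_of_exponent_le (by norm_num)
      push_cast
      linarith [key]
    have u4 : (p:ℝ) ^ β * (2:ℝ) ^ (7 * k + 20) ≤ (p:ℝ) ^ β * (p:ℝ) ^ ε :=
      mul_le_mul_of_nonneg_left u3 (by positivity)
    rw [← Real.rpow_add hp0] at u4
    linarith
end
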